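/- arXiv:2104.05701 — 4 statements merged into one kernel-verified Lean document; each statement's English description precedes it below -/
import Mathlib

section
/- For each n-cycle permutation f̄ in S_n, there exists a unique bijection f: ℤ → ℤ satisfying f(i+n) = f(i)+n for all i, i < f(i) < i+n for all i, and f(i) ≡ f̄(i) (mod n) for all 1 ≤ i ≤ n. -/
/-! The window condition `i < f i < i + n` leaves exactly one choice for `f i` in the residue
class of `σ i`, namely `i` plus the representative of `σ i - i` in `[1, n - 1]`; it is positive
because an `n`-cycle has no fixed points. Two `n`-periodic affine maps that agree on `[1, n]`
agree everywhere. -/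

open Finset

/-- `f : ℤ → ℤ` is an `n`-periodic affine permutation. -/
def IsAffinePerm (n : ℕ) (f : ℤ → ℤ) : Prop :=
  Function.Bijective f ∧ ∀ i : ℤ, f (i + (n : ℤ)) = f i + (n : ℤ)

/-- Boundedness condition `i ≤ f i ≤ i + n`. -/
def IsBoundedFn (n : ℕ) (f : ℤ → ℤ) : Prop :=
  ∀ i : ℤ, i ≤ f i ∧ f i ≤ i + (n : ℤ)

/-- Bounded affine permutation. -/
def IsBAP (n : ℕ) (f : ℤ → ℤ) : Prop := IsAffinePerm n f ∧ IsBoundedFn n f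

/-- The orbit of the residue of `a` under the reduction of `f` modulo `n`. -/
def orbitF (n : ℕ) (f : ℤ → ℤ) (a : ℤ) : Finset ℤ :=
  (Finset.range n).image (fun r => (f^[r] a) % (n : ℤ))

/-- The reduction of `f` modulo `n` is an `n`-cycle. -/
def IsCycleMod (n : ℕ) (f : ℤ → ℤ) : Prop :=
  ∀ j : ℤ, ∃ r : ℕ, r < n ∧ (f^[r] 0) % (n : ℤ) = j % (n : ℤ)

/-- The winding number `k(f̄) = #{i ∈ [1,n] : f̄(i) < i} = #{i ∈ [1,n] : f(i) > n}`. -/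
noncomputable def winding (n : ℕ) (f : ℤ → ℤ) : ℕ :=
  ((Finset.Icc (1 : ℤ) (n : ℤ)).filter (fun i => (n : ℤ) < f i)).card

/-- `f ∈ Θ_{k,n}`: a bounded affine permutation whose reduction modulo `n`
is an `n`-cycle with winding number `k`. -/
def IsTheta (k n : ℕ) (f : ℤ → ℤ) : Prop :=
  IsBAP n f ∧ IsCycleMod n f ∧ winding n f = k

/-- Inversions of `f`: pairs `i < j` with `f(i) > f(j)` and `i ∈ [n]`
(for a bounded affine permutation all inversions lie in the indicated box). -/
noncomputable def inversions (n : ℕ) (f : ℤ → ℤ) : Finset (ℤ × ℤ) :=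
  ((Finset.Icc (1 : ℤ) (n : ℤ)) ×ˢ (Finset.Icc (1 : ℤ) (3 * (n : ℤ)))).filter
    (fun p => p.1 < p.2 ∧ f p.2 < f p.1)

/-- The length `ℓ(f)`, i.e. the number of inversions. -/
noncomputable def alen (n : ℕ) (f : ℤ → ℤ) : ℕ := (inversions n f).card

/-- The number of cycles of the reduction of `f` modulo `n`. -/
def numCycles (n : ℕ) (f : ℤ → ℤ) : ℕ :=
  ((Finset.range n).image (fun a : ℕ => orbitF n f (a : ℤ))).card

/-- The affine simple transposition `s_i`, swapping `i + rn` and `i + 1 + rn` for all `r`. -/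
def sT (n : ℕ) (i : ℤ) (j : ℤ) : ℤ :=
  if j % (n : ℤ) = i % (n : ℤ) then j + 1
  else if j % (n : ℤ) = (i + 1) % (n : ℤ) then j - 1
  else j

/-- `s_i f`. -/
def mulS (n : ℕ) (i : ℤ) (f : ℤ → ℤ) : ℤ → ℤ := fun m => sT n i (f m)

/-- `f s_i`. -/
def smulS (n : ℕ) (i : ℤ) (f : ℤ → ℤ) : ℤ → ℤ := fun m => f (sT n i m)

/-- `s_i f s_i`. -/
def conjS (n : ℕ) (i : ℤ) (f : ℤ → ℤ) : ℤ → ℤ := fun m => sT n i (f (sT n i m))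

/-- The cyclic shift `σ`. -/
def cshift (f : ℤ → ℤ) : ℤ → ℤ := fun i => f (i - 1) + 1

/-- Resolving the crossing `(i,j)`: swap the values `f(i)` and `f(j)` `n`-periodically. -/
def resolve (n : ℕ) (f : ℤ → ℤ) (i j : ℤ) : ℤ → ℤ := fun m =>
  if m % (n : ℤ) = i % (n : ℤ) then f j + (m - i)
  else if m % (n : ℤ) = j % (n : ℤ) then f i + (m - j)
  else f m

/-- `g'` is the order-preserving relabeling (by `ℤ`, `n'`-periodically) of the
restriction of `g` to the set `S` of integers. -/
def IsRelabelOn (n : ℕ) (g : ℤ → ℤ) (S : Set ℤ) (n' : ℕ) (g' : ℤ → ℤ) : Prop :=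
  ∃ φ : ℤ → ℤ, StrictMono φ ∧ (∀ m : ℤ, φ (m + (n' : ℤ)) = φ m + (n : ℤ)) ∧
    Set.range φ = S ∧ ∀ m : ℤ, g (φ m) = φ (g' m)

/-- The parameters `(k₁, n₁)` of the cycle of `g` through `a`:
`n₁` is the size of the orbit of the residue of `a`, and `k₁` is the winding number of the
permutation obtained by order-preserving relabeling of the restriction of `g`
to the integers whose residue lies in that orbit. -/
noncomputable def resParamsAt (n : ℕ) (g : ℤ → ℤ) (a : ℤ) : ℕ × ℕ :=
  (sInf {k₁ : ℕ | ∃ g₁ : ℤ → ℤ,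
      IsRelabelOn n g {m : ℤ | m % (n : ℤ) ∈ orbitF n g a} (orbitF n g a).card g₁ ∧
      winding (orbitF n g a).card g₁ = k₁},
   (orbitF n g a).card)

/-- The inversion multiset `F'(f)`: one point `(k₁, n₁)` for each inversion `(i,j)`,
recording the parameters of the cycle through `i` after resolving the crossing. -/
noncomputable def invMultiset (n : ℕ) (f : ℤ → ℤ) : Multiset (ℕ × ℕ) :=
  Multiset.map (fun p => resParamsAt n (resolve n f p.1 p.2) p.1) (inversions n f).val

/-- The inversion multiset `F(f)` in `(k, n-k)`-coordinates: points `(k₁, n₁ - k₁)`. -/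
noncomputable def invMultisetF (n : ℕ) (f : ℤ → ℤ) : Multiset (ℕ × ℕ) :=
  Multiset.map (fun p => (p.1, p.2 - p.1)) (invMultiset n f)

/-- `f` is repetition-free if its inversion multiset has no repeated elements. -/
def RepFree (n : ℕ) (f : ℤ → ℤ) : Prop := (invMultiset n f).Nodup

/-- A double crossing at `i`: with `a = f⁻¹(i+1)`, `b = f⁻¹(i)`, `c = f(i+1)`, `d = f(i)`,
we have `a < b < i < i+1 < c < d`. -/
def DoubleCrossingAt (n : ℕ) (f : ℤ → ℤ) (i : ℤ) : Prop :=
  ∃ a b : ℤ, f a = i + 1 ∧ f b = i ∧ a < b ∧ b < i ∧ i + 1 < f (i + 1) ∧ f (i + 1) < f i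

/-- `i` and `j` lie in the same cycle of the reduction of `f` modulo `n`. -/
def SameCycleMod (n : ℕ) (f : ℤ → ℤ) (i j : ℤ) : Prop :=
  j % (n : ℤ) ∈ orbitF n f i

/-- The recurrence defining the positroid Catalan numbers `C_f`. -/
structure CatalanRules (C : (n : ℕ) → (ℤ → ℤ) → ℕ) : Prop where
  base : ∀ f : ℤ → ℤ, IsBAP 1 f → C 1 f = 1
  fix_removal : ∀ (n n' : ℕ) (f f' : ℤ → ℤ), IsBAP n f → IsBAP n' f' →
    IsRelabelOn n f {m : ℤ | f m ≠ m ∧ f m ≠ m + (n : ℤ)} n' f' → C n f = C n' f'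
  mul_left : ∀ (n : ℕ) (f : ℤ → ℤ) (i : ℤ), 2 ≤ n → IsBAP n f →
    (f i = i + 1 ∨ f (i + 1) = i + (n : ℤ)) → C n f = C n (mulS n i f)
  mul_right : ∀ (n : ℕ) (f : ℤ → ℤ) (i : ℤ), 2 ≤ n → IsBAP n f →
    (f i = i + 1 ∨ f (i + 1) = i + (n : ℤ)) → C n f = C n (smulS n i f)
  conj_inv : ∀ (n : ℕ) (f : ℤ → ℤ) (i : ℤ), IsBAP n f → IsBAP n (conjS n i f) →
    alen n (conjS n i f) = alen n f → C n (conjS n i f) = C n f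
  double_same : ∀ (n : ℕ) (f : ℤ → ℤ) (i : ℤ), IsBAP n f → DoubleCrossingAt n f i →
    SameCycleMod n f i (i + 1) → C n (conjS n i f) = C n (mulS n i f) + C n f
  double_diff : ∀ (n : ℕ) (f : ℤ → ℤ) (i : ℤ), IsBAP n f → DoubleCrossingAt n f i →
    ¬ SameCycleMod n f i (i + 1) → C n (conjS n i f) = C n f

/-- The value `f^r(0)` for `r ∈ ℤ` (using `f^n(0) = kn` to extend periodically). -/
def bigPt (n k : ℕ) (f : ℤ → ℤ) (r : ℤ) : ℤ :=
  f^[(r % (n : ℤ)).toNat] 0 + (r / (n : ℤ)) * ((k : ℤ) * (n : ℤ))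

/-- The big path `P_∞` of `f`: the piecewise-linear path through the points
`(r, f^r(0)/n)` for `r ∈ ℤ` (horizontal coordinate `r`, vertical `f^r(0)/n`). -/
def bigPath (n k : ℕ) (f : ℤ → ℤ) : Set (ℝ × ℝ) :=
  ⋃ r : ℤ, segment ℝ ((r : ℝ), (bigPt n k f r : ℝ) / (n : ℝ))
    ((r : ℝ) + 1, (bigPt n k f (r + 1) : ℝ) / (n : ℝ))

/-- The small path `P^{(f)}`: the piecewise-linear path through the points
`(r, f^r(0)/n)` for `r = 0, 1, …, n`. -/
def smallPath (n : ℕ) (f : ℤ → ℤ) : Set (ℝ × ℝ) :=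
  ⋃ r ∈ Finset.range n, segment ℝ ((r : ℝ), ((f^[r] 0 : ℤ) : ℝ) / (n : ℝ))
    ((r : ℝ) + 1, ((f^[r + 1] 0 : ℤ) : ℝ) / (n : ℝ))

/-- The number of up steps among the first `t` steps of `s`. -/
def upsTo (n : ℕ) (s : Fin n → Bool) (t : ℕ) : ℕ :=
  (Finset.univ.filter (fun r : Fin n => r.val < t ∧ s r = true)).card

/-- The number of lattice paths from `(0,0)` to `(k, n-k)` with unit up and right steps
(`n` steps in total, recorded by `s : Fin n → Bool`, `true` = up) which stay above the
main diagonal of the `k × (n-k)` rectangle and avoid every point of `F`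
(points recorded as `(height, horizontal position)`). -/
noncomputable def dyckCount (k n : ℕ) (F : Multiset (ℕ × ℕ)) : ℕ :=
  Nat.card {s : Fin n → Bool //
    upsTo n s n = k ∧
    (∀ t ≤ n, k * (t - upsTo n s t) ≤ (n - k) * upsTo n s t) ∧
    (∀ t ≤ n, (upsTo n s t, t - upsTo n s t) ∉ F)}

def boundedLift {n : ℕ} [NeZero n] (σ : Equiv.Perm (ZMod n)) (i : ℤ) : ℤ :=
  i + ((σ i - i : ZMod n).val : ℤ)

section BoundedLift

variable {n : ℕ} [NeZero n] (σ : Equiv.Perm (ZMod n))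

theorem intCast_boundedLift (i : ℤ) : (boundedLift σ i : ZMod n) = σ i := by
  simp [boundedLift]

theorem boundedLift_add_natCast (i : ℤ) : boundedLift σ (i + n) = boundedLift σ i + n := by
  simp only [boundedLift, Int.cast_add, Int.cast_natCast, ZMod.natCast_self, add_zero]
  ring

theorem boundedLift_lt (i : ℤ) : boundedLift σ i < i + n := by
  have := ZMod.val_lt (σ i - i : ZMod n)
  simp only [boundedLift]
  omega

theorem lt_boundedLift {i : ℤ} (hi : σ i ≠ i) : i < boundedLift σ i := by
  have := ZMod.val_pos.mpr (sub_ne_zero.mpr hi)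
  simp only [boundedLift]
  omega

theorem boundedLift_injective : Function.Injective (boundedLift σ) := by
  intro i j hij
  have hres : (i : ZMod n) = j := σ.injective <| by
    rw [← intCast_boundedLift, ← intCast_boundedLift, hij]
  simpa [boundedLift, hres] using hij

theorem boundedLift_surjective : Function.Surjective (boundedLift σ) := by
  intro m
  refine ⟨m - ((m - σ⁻¹ m : ZMod n).val : ℤ), ?_⟩
  have hres : ((m - ((m - σ⁻¹ m : ZMod n).val : ℤ) : ℤ) : ZMod n) = σ⁻¹ m := by simp
  rw [boundedLift, hres, Equiv.Perm.coe_inv, Equiv.apply_symm_apply]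
  ring

theorem boundedLift_bijective : Function.Bijective (boundedLift σ) :=
  ⟨boundedLift_injective σ, boundedLift_surjective σ⟩

end BoundedLift

theorem Int.eq_of_intCast_eq_of_mem_Ico {n : ℕ} {a b i : ℤ} (h : (a : ZMod n) = b)
    (ha : a ∈ Set.Ico i (i + n)) (hb : b ∈ Set.Ico i (i + n)) : a = b := by
  have hdvd : (n : ℤ) ∣ a - b := (ZMod.intCast_eq_intCast_iff_dvd_sub b a n).mp h.symm
  have := Int.eq_zero_of_abs_lt_dvd hdvd (abs_lt.mpr ⟨by grind, by grind⟩)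
  omega

theorem eq_of_eqOn_Ioc_of_add_natCast {n : ℕ} (hn : 0 < n) {f g : ℤ → ℤ}
    (hf : ∀ i, f (i + n) = f i + n) (hg : ∀ i, g (i + n) = g i + n)
    (hfg : ∀ i : ℤ, 1 ≤ i → i ≤ n → f i = g i) : f = g := by
  have hper : Function.Periodic (fun i => f i - g i) (n : ℤ) := fun i => by
    simp only [hf, hg]
    ring
  funext i
  obtain ⟨j, hj, hij⟩ := hper.exists_mem_Ioc (by omega) i 0
  have := hfg j (by grind) (by grind)
  grind

/-- For each `n`-cycle `σ ∈ S_n` (realized as a permutation of `ZMod n`),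
there exists a unique bijection `f : ℤ → ℤ` with `f(i+n) = f(i)+n`, `i < f(i) < i+n`,
and `f(i) ≡ σ(i) (mod n)` for all `1 ≤ i ≤ n`. -/
theorem positroid_stmt0 (n : ℕ) [NeZero n] (σ : Equiv.Perm (ZMod n))
    (hσ : σ.IsCycle ∧ σ.support = Finset.univ) :
    ∃! f : ℤ → ℤ, Function.Bijective f ∧ (∀ i : ℤ, f (i + (n : ℤ)) = f i + (n : ℤ)) ∧
      (∀ i : ℤ, i < f i ∧ f i < i + (n : ℤ)) ∧
      (∀ i : ℤ, 1 ≤ i → i ≤ (n : ℤ) → ((f i : ZMod n) = σ (i : ZMod n))) := by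
  have hfix : ∀ a, σ a ≠ a := fun a => Equiv.Perm.mem_support.mp (hσ.2 ▸ Finset.mem_univ a)
  refine ⟨boundedLift σ, ⟨boundedLift_bijective σ, boundedLift_add_natCast σ,
    fun i => ⟨lt_boundedLift σ (hfix i), boundedLift_lt σ i⟩,
    fun i _ _ => intCast_boundedLift σ i⟩, ?_⟩
  rintro g ⟨-, hper, hbd, hcong⟩
  refine eq_of_eqOn_Ioc_of_add_natCast (NeZero.pos n) hper (boundedLift_add_natCast σ)
    fun i hi1 hin => ?_
  refine Int.eq_of_intCast_eq_of_mem_Ico (i := i) ?_ ⟨(hbd i).1.le, (hbd i).2⟩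
    ⟨(lt_boundedLift σ (hfix i)).le, boundedLift_lt σ i⟩
  rw [hcong i hi1 hin, intCast_boundedLift]
end

section
/- A bounded affine permutation f ∈ Θ_{k,n} (i.e., whose reduction mod n is an n-cycle with winding number k) satisfies f(j) ∈ [j+1, j+n-1] for all j ∈ ℤ; consequently, if f' = s_i f s_i for a simple transposition s_i and ℓ(f') ≤ ℓ(f), then f' is again a bounded affine permutation in Θ_{k,n}. -/
open Finset

/-!
Since `f̄` is an `n`-cycle and `n ≥ 2`, `f(j) ≢ j (mod n)`, which rules out the extreme values
`f(j) = j` and `f(j) = j + n`. By these strict bounds, `g = s_i f s_i` can fail to be bounded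
only if `f(i) = i + 1` or `f(i + 1) = i + n`. In both cases
`(a, b) ↦ (s_i a, s_i b)` maps the inversions of `f` injectively to inversions of `g` other
than `(i, i + 1)`, so `ℓ(g) > ℓ(f)`. Otherwise `g` is a bounded affine permutation, `ḡ` is
conjugate to `f̄` and hence an `n`-cycle, and the winding number is unchanged because
`k n = ∑_{m=1}^n (f(m) - m)`, which is additive under composition and vanishes at `s_i`.
-/

open Function

section Periodic

variable {n : ℕ} {f : ℤ → ℤ}

lemma not_modEq_add_one (hn : 1 < n) (x : ℤ) : ¬ x ≡ x + 1 [ZMOD n] := by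
  intro h
  have := Int.le_of_dvd one_pos (by simpa using Int.ModEq.dvd h)
  omega

lemma eq_of_modEq_of_lt {x y : ℤ} (h : x ≡ y [ZMOD n]) (h₁ : x < y + n) (h₂ : y < x + n) :
    x = y := by
  have := Int.eq_zero_of_abs_lt_dvd h.dvd (abs_sub_lt_iff.2 ⟨by omega, by omega⟩)
  omega

lemma periodic_sub_self (hf : ∀ x, f (x + n) = f x + n) : Periodic (fun x => f x - x) (n : ℤ) :=
  fun x => by simp only [hf]; ring

lemma apply_add_mul (hf : ∀ x, f (x + n) = f x + n) (x t : ℤ) : f (x + n * t) = f x + n * t := by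
  have := (periodic_sub_self hf).int_mul t x
  simp only [Int.cast_id, mul_comm _ (n : ℤ)] at this
  linarith

lemma modEq_apply (hf : ∀ x, f (x + n) = f x + n) {x y : ℤ} (h : x ≡ y [ZMOD n]) :
    f x ≡ f y [ZMOD n] := by
  obtain ⟨t, rfl⟩ := Int.modEq_iff_add_fac.1 h
  rw [apply_add_mul hf]
  exact Int.modEq_iff_add_fac.2 ⟨t, rfl⟩

lemma modEq_of_modEq_apply (hinj : Injective f) (hf : ∀ x, f (x + n) = f x + n) {x y : ℤ}
    (h : f x ≡ f y [ZMOD n]) : x ≡ y [ZMOD n] := by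
  obtain ⟨t, ht⟩ := Int.modEq_iff_add_fac.1 h
  rw [← apply_add_mul hf] at ht
  exact Int.modEq_iff_add_fac.2 ⟨t, hinj ht⟩

lemma modEq_iterate (hf : ∀ x, f (x + n) = f x + n) {x y : ℤ} (h : x ≡ y [ZMOD n]) (r : ℕ) :
    f^[r] x ≡ f^[r] y [ZMOD n] := by
  induction r with
  | zero => exact h
  | succ r ih => simpa only [iterate_succ_apply'] using modEq_apply hf ih

end Periodic

namespace IsCycleMod

variable {n : ℕ} {f : ℤ → ℤ}

lemma iterate_injOn (hc : IsCycleMod n f) {r r' : ℕ} (hr : r < n) (hr' : r' < n)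
    (h : f^[r] 0 ≡ f^[r'] 0 [ZMOD n]) : r = r' := by
  classical
  have hcover : Ico (0 : ℤ) n ⊆ (range n).image (fun r => f^[r] 0 % n) := fun x hx => by
    obtain ⟨hx0, hxn⟩ := mem_Ico.1 hx
    obtain ⟨r, hr, hrx⟩ := hc x
    exact mem_image.2 ⟨r, mem_range.2 hr, hrx.trans (Int.emod_eq_of_lt hx0 hxn)⟩
  have hcard : #((range n).image (fun r => f^[r] 0 % n)) = #(range n) :=
    le_antisymm card_image_le (by simpa using card_le_card hcover)
  exact injOn_of_card_image_eq hcard (mem_range.2 hr) (mem_range.2 hr') h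

-- Pigeonhole: the residues `f^[r] 0` for `r < n` are distinct, so the `n`-th one closes the cycle.
lemma iterate_self_modEq (hc : IsCycleMod n f) (hinj : Injective f)
    (hf : ∀ x, f (x + n) = f x + n) : f^[n] 0 ≡ 0 [ZMOD n] := by
  obtain ⟨r, hr, hrn⟩ := hc (f^[n] 0)
  cases r with
  | zero => exact hrn.symm
  | succ r =>
    obtain ⟨m, rfl⟩ : ∃ m, n = m + 1 := ⟨n - 1, by omega⟩
    rw [iterate_succ_apply', iterate_succ_apply'] at hrn
    have := hc.iterate_injOn (by omega) (by omega) (modEq_of_modEq_apply hinj hf hrn)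
    omega

lemma exists_iterate_modEq (hc : IsCycleMod n f) (hinj : Injective f)
    (hf : ∀ x, f (x + n) = f x + n) (x j : ℤ) : ∃ r < n, f^[r] x ≡ j [ZMOD n] := by
  obtain ⟨a, ha, hax : f^[a] 0 ≡ x [ZMOD n]⟩ := hc x
  obtain ⟨b, hb, hbj : f^[b] 0 ≡ j [ZMOD n]⟩ := hc j
  have hstep : ∀ r, f^[r] x ≡ f^[r + a] 0 [ZMOD n] := fun r => by
    rw [iterate_add_apply]; exact modEq_iterate hf hax.symm r
  rcases le_or_gt a b with hab | hab
  · refine ⟨b - a, by omega, (hstep _).trans ?_⟩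
    rwa [Nat.sub_add_cancel hab]
  · refine ⟨b + n - a, by omega, (hstep _).trans ?_⟩
    rw [show b + n - a + a = b + n by omega, iterate_add_apply]
    exact (modEq_iterate hf (hc.iterate_self_modEq hinj hf) b).trans hbj

lemma not_apply_modEq (hc : IsCycleMod n f) (hinj : Injective f)
    (hf : ∀ x, f (x + n) = f x + n) (hn : 1 < n) (j : ℤ) : ¬ f j ≡ j [ZMOD n] := by
  intro hj
  have hfix : ∀ r, f^[r] j ≡ j [ZMOD n] := fun r => by
    induction r with
    | zero => rfl
    | succ r ih => rw [iterate_succ_apply']; exact (modEq_apply hf ih).trans hj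
  obtain ⟨r, -, hr⟩ := hc.exists_iterate_modEq hinj hf j (j + 1)
  exact not_modEq_add_one hn j ((hfix r).symm.trans hr)

end IsCycleMod

lemma IsBAP.add_one_le_and_le_add_sub_one {n : ℕ} {f : ℤ → ℤ} (hf : IsBAP n f)
    (hc : IsCycleMod n f) (hn : 1 < n) (j : ℤ) : j + 1 ≤ f j ∧ f j ≤ j + n - 1 := by
  obtain ⟨⟨hbij, hfn⟩, hbd⟩ := hf
  have hne := hc.not_apply_modEq hbij.1 hfn hn j
  have h1 : f j ≠ j := fun h => hne (by rw [h])
  have h2 : f j ≠ j + n := fun h => hne (by rw [h]; exact Int.add_modulus_modEq_iff.2 rfl)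
  have := hbd j
  omega

section SimpleTransposition

variable {n : ℕ} {i x : ℤ}

lemma sT_of_modEq (h : x ≡ i [ZMOD n]) : sT n i x = x + 1 := if_pos h

lemma sT_of_modEq_add_one (hn : 1 < n) (h : x ≡ i + 1 [ZMOD n]) : sT n i x = x - 1 := by
  have hi : ¬ x ≡ i [ZMOD n] := fun hi => not_modEq_add_one hn i (hi.symm.trans h)
  exact (if_neg hi).trans (if_pos h)

lemma sT_of_not_modEq (h₁ : ¬ x ≡ i [ZMOD n]) (h₂ : ¬ x ≡ i + 1 [ZMOD n]) : sT n i x = x :=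
  (if_neg h₁).trans (if_neg h₂)

lemma sT_cases (hn : 1 < n) (i x : ℤ) :
    (x ≡ i [ZMOD n] ∧ sT n i x = x + 1) ∨ (x ≡ i + 1 [ZMOD n] ∧ sT n i x = x - 1) ∨
      (¬ x ≡ i [ZMOD n] ∧ ¬ x ≡ i + 1 [ZMOD n] ∧ sT n i x = x) := by
  by_cases h₁ : x ≡ i [ZMOD n]
  · exact .inl ⟨h₁, sT_of_modEq h₁⟩
  by_cases h₂ : x ≡ i + 1 [ZMOD n]
  · exact .inr (.inl ⟨h₂, sT_of_modEq_add_one hn h₂⟩)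
  · exact .inr (.inr ⟨h₁, h₂, sT_of_not_modEq h₁ h₂⟩)

lemma sT_add (i x : ℤ) : sT n i (x + n) = sT n i x + n := by
  simp only [sT, Int.add_emod_right]
  split_ifs <;> ring

lemma sT_sT (hn : 1 < n) (i x : ℤ) : sT n i (sT n i x) = x := by
  rcases sT_cases hn i x with ⟨h, hs⟩ | ⟨h, hs⟩ | ⟨-, -, hs⟩
  · rw [hs, sT_of_modEq_add_one hn (h.add_right 1), add_sub_cancel_right]
  · have h' : x - 1 ≡ i [ZMOD n] := by simpa using h.sub_right 1
    rw [hs, sT_of_modEq h', sub_add_cancel]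
  · rw [hs, hs]

lemma sT_bijective (hn : 1 < n) (i : ℤ) : Bijective (sT n i) :=
  (involutive_iff_iter_2_eq_id.2 (funext (sT_sT hn i))).bijective

lemma sub_one_le_sT_and_sT_le_add_one (hn : 1 < n) (i x : ℤ) : x - 1 ≤ sT n i x ∧ sT n i x ≤ x + 1 := by
  rcases sT_cases hn i x with ⟨-, hs⟩ | ⟨-, hs⟩ | ⟨-, -, hs⟩ <;> omega

lemma sT_lt_sT (hn : 1 < n) {x y : ℤ} (hxy : x < y) (h : ¬ (y = x + 1 ∧ x ≡ i [ZMOD n])) :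
    sT n i x < sT n i y := by
  have hne : sT n i x ≠ sT n i y := fun he => hxy.ne ((sT_bijective hn i).1 he)
  have hy := sub_one_le_sT_and_sT_le_add_one hn i y
  rcases sT_cases hn i x with ⟨hx, hs⟩ | ⟨-, hs⟩ | ⟨-, -, hs⟩
  · have : y ≠ x + 1 := fun hy => h ⟨hy, hx⟩
    omega
  all_goals omega

end SimpleTransposition

section Conjugation

variable {n : ℕ} {f : ℤ → ℤ} {i : ℤ}

lemma conjS_sT (hn : 1 < n) (x : ℤ) : conjS n i f (sT n i x) = sT n i (f x) := by
  simp only [conjS, sT_sT hn]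

lemma conjS_add (hf : ∀ x, f (x + n) = f x + n) (x : ℤ) :
    conjS n i f (x + n) = conjS n i f x + n := by
  simp only [conjS, sT_add, hf]

lemma conjS_bijective (hn : 1 < n) (hf : Bijective f) : Bijective (conjS n i f) :=
  ((sT_bijective hn i).comp hf).comp (sT_bijective hn i)

lemma iterate_conjS (hn : 1 < n) (r : ℕ) (x : ℤ) :
    (conjS n i f)^[r] x = sT n i (f^[r] (sT n i x)) := by
  induction r generalizing x with
  | zero => exact (sT_sT hn i x).symm
  | succ r ih => rw [iterate_succ_apply, ih, conjS, sT_sT hn, ← iterate_succ_apply]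

lemma IsCycleMod.conjS (hc : IsCycleMod n f) (hn : 1 < n) (hinj : Injective f)
    (hf : ∀ x, f (x + n) = f x + n) : IsCycleMod n (conjS n i f) := fun j => by
  obtain ⟨r, hr, hrj⟩ := hc.exists_iterate_modEq hinj hf (sT n i 0) (sT n i j)
  refine ⟨r, hr, ?_⟩
  rw [iterate_conjS hn, ← sT_sT hn i j]
  exact modEq_apply (sT_add i) hrj

lemma isBoundedFn_conjS (hn : 1 < n) (hf : ∀ x, f (x + n) = f x + n)
    (hstrict : ∀ j, j + 1 ≤ f j ∧ f j ≤ j + n - 1) (h₁ : f i ≠ i + 1) (h₂ : f (i + 1) ≠ i + n) :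
    IsBoundedFn n (conjS n i f) := by
  intro m
  have hmn : m + n ≡ m [ZMOD n] := Int.add_modulus_modEq_iff.2 rfl
  rcases sT_cases hn i m with ⟨hm, hs⟩ | ⟨hm, hs⟩ | ⟨-, -, hs⟩
  · obtain ⟨t, ht⟩ := Int.modEq_iff_add_fac.1 hm.symm
    have hv : f (m + 1) = f (i + 1) + n * t := by
      rw [ht, ← apply_add_mul hf]; ring_nf
    have := hstrict (m + 1)
    have := sub_one_le_sT_and_sT_le_add_one hn i (f (m + 1))
    rw [conjS, hs]
    rcases sT_cases hn i (f (m + 1)) with ⟨hvi, hsv⟩ | ⟨-, hsv⟩ | ⟨-, -, hsv⟩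
    · have : f (m + 1) = m + n :=
        eq_of_modEq_of_lt ((hvi.trans hm.symm).trans hmn.symm) (by omega) (by omega)
      omega
    all_goals omega
  · obtain ⟨t, ht⟩ := Int.modEq_iff_add_fac.1 hm.symm
    have hv : f (m - 1) = f i + n * t := by
      rw [show m - 1 = i + n * t by rw [ht]; ring, apply_add_mul hf]
    have := hstrict (m - 1)
    have := sub_one_le_sT_and_sT_le_add_one hn i (f (m - 1))
    rw [conjS, hs]
    rcases sT_cases hn i (f (m - 1)) with ⟨-, hsv⟩ | ⟨hvi, hsv⟩ | ⟨-, -, hsv⟩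
    · omega
    · have : f (m - 1) = m := eq_of_modEq_of_lt (hvi.trans hm.symm) (by omega) (by omega)
      omega
    · omega
  · have := hstrict m
    have := sub_one_le_sT_and_sT_le_add_one hn i (f m)
    rw [conjS, hs]
    omega

end Conjugation

section Displacement

variable {n : ℕ}

lemma toIocMod_modEq (hn : (0 : ℤ) < n) (x : ℤ) : toIocMod hn 0 x ≡ x [ZMOD n] :=
  Int.modEq_iff_add_fac.2
    ⟨toIocDiv hn 0 x, by rw [mul_comm]; exact (toIocMod_add_toIocDiv_mul hn 0 x).symm⟩

lemma toIocMod_eq_of_modEq (hn : (0 : ℤ) < n) {x y : ℤ} (h : x ≡ y [ZMOD n]) (hy₀ : 0 < y)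
    (hy : y ≤ n) : toIocMod hn 0 x = y := by
  have hmem := toIocMod_mem_Ioc hn 0 x
  rw [Set.mem_Ioc, zero_add] at hmem
  exact eq_of_modEq_of_lt ((toIocMod_modEq hn x).trans h) (by omega) (by omega)

/-- Reduction to `(0, n]` turns a bijection commuting with `x ↦ x + n` into a permutation of
`[1, n]`. -/
lemma sum_Icc_toIocMod_comp {M : Type*} [AddCommMonoid M] (hn : (0 : ℤ) < n) {q : ℤ → ℤ}
    (hq : Bijective q) (hqn : ∀ x, q (x + n) = q x + n) (φ : ℤ → M) :
    ∑ m ∈ Icc (1 : ℤ) n, φ (toIocMod hn 0 (q m)) = ∑ m ∈ Icc (1 : ℤ) n, φ m := by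
  have hmem : ∀ x, toIocMod hn 0 x ∈ Icc (1 : ℤ) n := fun x => by
    have := toIocMod_mem_Ioc hn 0 x
    rw [Set.mem_Ioc, zero_add] at this
    exact mem_Icc.2 ⟨by omega, this.2⟩
  refine sum_nbij (fun m => toIocMod hn 0 (q m)) (fun m _ => hmem _) ?_ ?_ (fun _ _ => rfl)
  · intro a ha b hb (hab : toIocMod hn 0 (q a) = toIocMod hn 0 (q b))
    have hqab : q a ≡ q b [ZMOD n] :=
      (toIocMod_modEq hn (q a)).symm.trans (hab ▸ toIocMod_modEq hn (q b))
    rw [coe_Icc, Set.mem_Icc] at ha hb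
    exact eq_of_modEq_of_lt (modEq_of_modEq_apply hq.1 hqn hqab) (by omega) (by omega)
  · intro x hx
    obtain ⟨y, rfl⟩ := hq.2 x
    rw [coe_Icc, Set.mem_Icc] at hx
    exact ⟨toIocMod hn 0 y, hmem y,
      toIocMod_eq_of_modEq hn (modEq_apply hqn (toIocMod_modEq hn y)) (by omega) hx.2⟩

lemma sum_Icc_comp_of_periodic (hn : (0 : ℤ) < n) {q : ℤ → ℤ} (hq : Bijective q)
    (hqn : ∀ x, q (x + n) = q x + n) {φ : ℤ → ℤ} (hφ : Periodic φ n) :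
    ∑ m ∈ Icc (1 : ℤ) n, φ (q m) = ∑ m ∈ Icc (1 : ℤ) n, φ m := by
  rw [← sum_Icc_toIocMod_comp hn hq hqn φ]
  refine sum_congr rfl fun m _ => ?_
  obtain ⟨t, ht⟩ := Int.modEq_iff_add_fac.1 (toIocMod_modEq hn (q m))
  have := hφ.zsmul t (toIocMod hn 0 (q m))
  rwa [smul_eq_mul, mul_comm, ← ht] at this

noncomputable def displacement (n : ℕ) (f : ℤ → ℤ) : ℤ := ∑ m ∈ Icc (1 : ℤ) n, (f m - m)

lemma displacement_comp (hn : 0 < n) {p q : ℤ → ℤ} (hpn : ∀ x, p (x + n) = p x + n)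
    (hq : Bijective q) (hqn : ∀ x, q (x + n) = q x + n) :
    displacement n (p ∘ q) = displacement n p + displacement n q := by
  have key := sum_Icc_comp_of_periodic (by exact_mod_cast hn) hq hqn (periodic_sub_self hpn)
  simp only [displacement, comp_apply]
  rw [← key, ← sum_add_distrib]
  exact sum_congr rfl fun m _ => by ring

lemma displacement_sT (hn : 1 < n) (i : ℤ) : displacement n (sT n i) = 0 := by
  have h := displacement_comp (by omega) (sT_add i) (sT_bijective hn i) (sT_add i)
  rw [show sT n i ∘ sT n i = id from funext (sT_sT hn i)] at h
  have hid : displacement n id = 0 := by simp [displacement]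
  omega

lemma displacement_conjS (hn : 1 < n) {f : ℤ → ℤ} (hf : Bijective f)
    (hfn : ∀ x, f (x + n) = f x + n) (i : ℤ) :
    displacement n (conjS n i f) = displacement n f := by
  have hfs : ∀ x, (f ∘ sT n i) (x + n) = (f ∘ sT n i) x + n := fun x => by
    simp only [comp_apply, sT_add, hfn]
  rw [show conjS n i f = sT n i ∘ (f ∘ sT n i) from rfl,
    displacement_comp (by omega) (sT_add i) (hf.comp (sT_bijective hn i)) hfs,
    displacement_comp (by omega) hfn (sT_bijective hn i) (sT_add i), displacement_sT hn]
  ring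

-- Reducing `f m ∈ [1, 2n]` into `[1, n]` subtracts `n` exactly when `f m > n`, and the reduced
-- values are a permutation of `[1, n]`.
lemma winding_mul_eq_displacement (hn : 0 < n) {f : ℤ → ℤ} (hf : IsBAP n f) :
    (winding n f : ℤ) * n = displacement n f := by
  have hp : (0 : ℤ) < n := by exact_mod_cast hn
  have hred : ∀ m ∈ Icc (1 : ℤ) n,
      toIocMod hp 0 (f m) = f m - if (n : ℤ) < f m then (n : ℤ) else 0 := fun m hm => by
    rw [mem_Icc] at hm
    have := hf.2 m
    split_ifs with h
    · exact toIocMod_eq_of_modEq hp (Int.modEq_iff_add_fac.2 ⟨-1, by ring⟩) (by omega) (by omega)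
    · exact toIocMod_eq_of_modEq hp (by rw [sub_zero]) (by omega) (by omega)
  have hperm := sum_Icc_toIocMod_comp hp hf.1.1 hf.1.2 id
  simp only [id] at hperm
  calc (winding n f : ℤ) * n
      = ∑ m ∈ Icc (1 : ℤ) n, if (n : ℤ) < f m then (n : ℤ) else 0 := by
        rw [← sum_filter, sum_const, winding, nsmul_eq_mul]
    _ = ∑ m ∈ Icc (1 : ℤ) n, (f m - toIocMod hp 0 (f m)) :=
        sum_congr rfl fun m hm => by rw [hred m hm]; ring
    _ = displacement n f := by
        rw [displacement, sum_sub_distrib, sum_sub_distrib, hperm]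

lemma winding_conjS (hn : 1 < n) {f : ℤ → ℤ} (hf : IsBAP n f) (i : ℤ)
    (hg : IsBoundedFn n (conjS n i f)) : winding n (conjS n i f) = winding n f := by
  have hg' : IsBAP n (conjS n i f) := ⟨⟨conjS_bijective hn hf.1.1, conjS_add hf.1.2⟩, hg⟩
  have h := winding_mul_eq_displacement (by omega) hg'
  rw [displacement_conjS hn hf.1.1 hf.1.2, ← winding_mul_eq_displacement (by omega) hf] at h
  exact_mod_cast mul_right_cancel₀ (by positivity) h

end Displacement

section Length

variable {n : ℕ}

-- The translate of `p` by a multiple of `(n, n)` whose first entry lies in `[1, n]`, i.e. the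
-- representative of an inversion class that `inversions` counts.
def toWindow (n : ℕ) (p : ℤ × ℤ) : ℤ × ℤ :=
  (p.1 - n * ((p.1 - 1) / n), p.2 - n * ((p.1 - 1) / n))

lemma toWindow_mem_inversions (hn : 0 < n) {g : ℤ → ℤ} (hg : ∀ x, g (x + n) = g x + n)
    {x y : ℤ} (hxy : x < y) (hyx : y ≤ x + 2 * n) (hgxy : g y < g x) :
    toWindow n (x, y) ∈ inversions n g := by
  have hrem := Int.emod_def (x - 1) n
  have := Int.emod_nonneg (x - 1) (by omega : (n : ℤ) ≠ 0)
  have := Int.emod_lt_of_pos (x - 1) (by omega : (0 : ℤ) < n)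
  have hgx := apply_add_mul hg x (-((x - 1) / n))
  have hgy := apply_add_mul hg y (-((x - 1) / n))
  simp only [mul_neg, ← sub_eq_add_neg] at hgx hgy
  simp only [toWindow, inversions, mem_filter, mem_product, mem_Icc, hgx, hgy]
  refine ⟨⟨⟨?_, ?_⟩, ?_, ?_⟩, ?_, ?_⟩ <;> linarith

lemma modEq_and_sub_eq_of_toWindow_eq {p p' : ℤ × ℤ} (h : toWindow n p = toWindow n p') :
    p.1 ≡ p'.1 [ZMOD n] ∧ p.2 - p.1 = p'.2 - p'.1 := by
  simp only [toWindow, Prod.mk.injEq] at h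
  exact ⟨Int.modEq_iff_add_fac.2 ⟨(p'.1 - 1) / n - (p.1 - 1) / n, by linarith⟩, by linarith⟩

variable {f : ℤ → ℤ} {i : ℤ}

lemma apply_lt_apply_add_one (hfn : ∀ x, f (x + n) = f x + n)
    (hstrict : ∀ j, j + 1 ≤ f j ∧ f j ≤ j + n - 1) (hbad : f i = i + 1 ∨ f (i + 1) = i + n)
    {a : ℤ} (ha : a ≡ i [ZMOD n]) : f a < f (a + 1) := by
  obtain ⟨t, rfl⟩ := Int.modEq_iff_add_fac.1 ha.symm
  have h₁ := apply_add_mul hfn (i + 1) t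
  rw [add_right_comm] at h₁
  have := hstrict (i + n * t)
  have := hstrict (i + n * t + 1)
  rcases hbad with h | h
  · have := apply_add_mul hfn i t
    omega
  · omega

lemma apply_ne_apply_add_one (hinj : Injective f) (hfn : ∀ x, f (x + n) = f x + n)
    (hstrict : ∀ j, j + 1 ≤ f j ∧ f j ≤ j + n - 1) (hbad : f i = i + 1 ∨ f (i + 1) = i + n)
    {a b : ℤ} (hab : a < b) (hb : f b ≡ i [ZMOD n]) : f a ≠ f b + 1 := by
  intro he
  obtain ⟨t, ht⟩ := Int.modEq_iff_add_fac.1 hb.symm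
  have := hstrict a
  have := hstrict b
  rcases hbad with h | h
  · have := apply_add_mul hfn i t
    have : a = i + n * t := hinj (by omega)
    omega
  · have := apply_add_mul hfn (i + 1) t
    have := hfn b
    have : b + n = i + 1 + n * t := hinj (by omega)
    omega

lemma conjS_add_one_lt (hn : 1 < n) (hstrict : ∀ j, j + 1 ≤ f j ∧ f j ≤ j + n - 1)
    (hbad : f i = i + 1 ∨ f (i + 1) = i + n) : conjS n i f (i + 1) < conjS n i f i := by
  have hi : sT n i i = i + 1 := sT_of_modEq rfl
  have hi₁ : sT n i (i + 1) = i := by rw [sT_of_modEq_add_one hn rfl, add_sub_cancel_right]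
  simp only [conjS, hi, hi₁]
  have := sub_one_le_sT_and_sT_le_add_one hn i (f i)
  have := sub_one_le_sT_and_sT_le_add_one hn i (f (i + 1))
  have := hstrict i
  have := hstrict (i + 1)
  rcases hbad with h | h
  · rw [h, hi₁]
    omega
  · rw [h, sT_of_modEq (Int.add_modulus_modEq_iff.2 rfl)]
    omega

lemma toWindow_sT_mem_inversions_conjS (hn : 1 < n) (hinj : Injective f)
    (hfn : ∀ x, f (x + n) = f x + n) (hstrict : ∀ j, j + 1 ≤ f j ∧ f j ≤ j + n - 1)
    (hbad : f i = i + 1 ∨ f (i + 1) = i + n) {a b : ℤ} (hab : (a, b) ∈ inversions n f) :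
    toWindow n (sT n i a, sT n i b) ∈ inversions n (conjS n i f) := by
  simp only [inversions, mem_filter] at hab
  obtain ⟨-, hlt, hflt⟩ := hab
  have := hstrict a
  have := hstrict b
  have := sub_one_le_sT_and_sT_le_add_one hn i a
  have := sub_one_le_sT_and_sT_le_add_one hn i b
  refine toWindow_mem_inversions (by omega) (conjS_add hfn) ?_ (by omega) ?_
  · exact sT_lt_sT hn hlt fun ⟨hb, ha⟩ =>
      (apply_lt_apply_add_one hfn hstrict hbad ha).not_gt (hb ▸ hflt)
  · rw [conjS_sT hn, conjS_sT hn]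
    exact sT_lt_sT hn hflt fun ⟨he, hb⟩ => apply_ne_apply_add_one hinj hfn hstrict hbad hlt hb he

lemma toWindow_sT_ne (hn : 1 < n) {a b : ℤ} (hab : a < b) :
    toWindow n (sT n i a, sT n i b) ≠ toWindow n (i, i + 1) := by
  intro h
  obtain ⟨ha, hba⟩ := modEq_and_sub_eq_of_toWindow_eq h
  have hb : sT n i b ≡ i + 1 [ZMOD n] := by
    rw [show sT n i b = sT n i a + 1 by simp only at hba; omega]
    exact ha.add_right 1
  have := sT_sT hn i a
  have := sT_sT hn i b
  rw [sT_of_modEq ha] at *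
  rw [sT_of_modEq_add_one hn hb] at *
  simp only at hba
  omega

lemma alen_lt_alen_conjS (hn : 1 < n) (hinj : Injective f) (hfn : ∀ x, f (x + n) = f x + n)
    (hstrict : ∀ j, j + 1 ≤ f j ∧ f j ≤ j + n - 1) (hbad : f i = i + 1 ∨ f (i + 1) = i + n) :
    alen n f < alen n (conjS n i f) := by
  set Φ : ℤ × ℤ → ℤ × ℤ := fun p => toWindow n (sT n i p.1, sT n i p.2)
  have hmaps : Set.MapsTo Φ (inversions n f)
      ((inversions n (conjS n i f)).erase (toWindow n (i, i + 1))) := fun ⟨a, b⟩ hab => by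
    have hlt : a < b := (mem_filter.1 hab).2.1
    exact mem_erase.2 ⟨toWindow_sT_ne hn hlt,
      toWindow_sT_mem_inversions_conjS hn hinj hfn hstrict hbad hab⟩
  have hΦ : Set.InjOn Φ (inversions n f) := by
    rintro ⟨a, b⟩ hab ⟨a', b'⟩ hab' he
    simp only [mem_coe, inversions, mem_filter, mem_product, mem_Icc] at hab hab'
    obtain ⟨hmod, hdiff⟩ := modEq_and_sub_eq_of_toWindow_eq he
    have ha : a = a' := eq_of_modEq_of_lt
      (modEq_of_modEq_apply (sT_bijective hn i).1 (sT_add i) hmod) (by omega) (by omega)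
    subst ha
    have hb : sT n i b = sT n i b' := by simp only at hdiff; omega
    rw [(sT_bijective hn i).1 hb]
  have hmem : toWindow n (i, i + 1) ∈ inversions n (conjS n i f) :=
    toWindow_mem_inversions (by omega) (conjS_add hfn) (lt_add_one i) (by omega)
      (conjS_add_one_lt hn hstrict hbad)
  calc alen n f ≤ #((inversions n (conjS n i f)).erase (toWindow n (i, i + 1))) :=
        card_le_card_of_injOn Φ hmaps hΦ
    _ < alen n (conjS n i f) := card_erase_lt_of_mem hmem

end Length

/-- Any `f ∈ Θ_{k,n}` satisfies `f(j) ∈ [j+1, j+n-1]` for all `j`;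
consequently, if `f' = s_i f s_i` has `ℓ(f') ≤ ℓ(f)` then `f' ∈ Θ_{k,n}` as well. -/
theorem positroid_stmt2 (k n : ℕ) (hk : 1 ≤ k) (hkn : k < n) (f : ℤ → ℤ)
    (hf : IsTheta k n f) :
    (∀ j : ℤ, j + 1 ≤ f j ∧ f j ≤ j + (n : ℤ) - 1) ∧
    (∀ i : ℤ, alen n (conjS n i f) ≤ alen n f → IsTheta k n (conjS n i f)) := by
  obtain ⟨hbap, hc, rfl⟩ := hf
  have hn : 1 < n := by omega
  have hstrict := hbap.add_one_le_and_le_add_sub_one hc hn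
  refine ⟨hstrict, fun i hlen => ?_⟩
  have hgood : f i ≠ i + 1 ∧ f (i + 1) ≠ i + n := by
    rw [← not_or]
    exact fun hbad => (alen_lt_alen_conjS hn hbap.1.1.1 hbap.1.2 hstrict hbad).not_ge hlen
  have hbd := isBoundedFn_conjS hn hbap.1.2 hstrict hgood.1 hgood.2
  exact ⟨⟨⟨conjS_bijective hn hbap.1.1, conjS_add hbap.1.2⟩, hbd⟩,
    hc.conjS hn hbap.1.1.1 hbap.1.2, winding_conjS hn hbap i hbd⟩
end

section
/- Let f ∈ Θ_{k,n} and let (i,j) be an inversion of f. Then the permutation f̄^{(i,j)} ∈ S_n, obtained from f̄ by swapping the values at positions i mod n and j mod n, is a product of exactly two disjoint cycles. -/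
open Finset

/-!
Reduced modulo `n`, resolving the crossing `(i, j)` composes the `n`-cycle `f̄` with the
transposition of the residues of `i` and `j`; these are distinct, since `j ≡ i` would force
`f j - f i = j - i > 0`. Labelling the residues along the cycle by `ZMod n`, so that `f̄` becomes
`u ↦ u + 1` and the residues of `i`, `j` become `s ≠ t`, the composite maps the arc
`s + 1, …, t` cyclically onto itself, and likewise the complementary arc `t + 1, …, s`.
These two arcs are therefore its only orbits.
-/

open Function Equiv

section Orbits

variable {α : Type*} [DecidableEq α]

def iterateOrbit (N : ℕ) (π : α → α) (x : α) : Finset α :=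
  (range N).image fun r => π^[r] x

lemma mem_iterateOrbit_self {N : ℕ} (hN : 0 < N) (π : α → α) (x : α) :
    x ∈ iterateOrbit N π x :=
  mem_image.2 ⟨0, mem_range.2 hN, rfl⟩

lemma iterateOrbit_eq_image_of_cycle {L N : ℕ} [NeZero L] (hLN : L ≤ N) {π : α → α}
    {ψ : ZMod L → α} (hψ : ∀ m, π (ψ m) = ψ (m + 1)) (m : ZMod L) :
    iterateOrbit N π (ψ m) = univ.image ψ := by
  have hiter : ∀ r : ℕ, π^[r] (ψ m) = ψ (m + r) := by
    intro r
    induction r with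
    | zero => simp
    | succ r ih => rw [iterate_succ_apply', ih, hψ, Nat.cast_succ, add_assoc]
  ext y
  simp only [iterateOrbit, mem_image, mem_range, mem_univ, true_and, hiter]
  constructor
  · rintro ⟨r, -, rfl⟩
    exact ⟨_, rfl⟩
  · rintro ⟨z, rfl⟩
    refine ⟨(z - m).val, (ZMod.val_lt _).trans_le hLN, ?_⟩
    rw [ZMod.natCast_zmod_val, add_sub_cancel]

lemma ZMod.exists_arc_or_exists_arc {n : ℕ} [NeZero n] {s t : ZMod n} (hst : s ≠ t)
    (u : ZMod n) :
    (∃ k < (t - s).val, u = s + 1 + k) ∨ (∃ k < (s - t).val, u = t + 1 + k) := by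
  set e := (u - (s + 1)).val
  have hu : u = s + 1 + e := by rw [ZMod.natCast_zmod_val]; ring
  by_cases he : e < (t - s).val
  · exact Or.inl ⟨e, he, hu⟩
  · have hts : t - s ≠ 0 := sub_ne_zero.2 hst.symm
    have hst' : (s - t).val = n - (t - s).val := by
      rw [← neg_sub, ZMod.neg_val, if_neg hts]
    refine Or.inr ⟨e - (t - s).val, by have := ZMod.val_lt (u - (s + 1)); omega, ?_⟩
    rw [Nat.cast_sub (not_lt.1 he), ZMod.natCast_zmod_val, ZMod.natCast_zmod_val]
    ring

variable {n : ℕ} [NeZero n] {χ : α → α} {w : ZMod n → α}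

lemma comp_swap_apply_arc (hw : Injective w) (hχ : Semiconj w (· + 1) χ) {s t : ZMod n}
    {d : ℕ} [NeZero d] (hd : (t - s).val = d) (m : ZMod d) :
    (χ ∘ swap (w s) (w t)) (w (s + 1 + m.val)) = w (s + 1 + (m + 1).val) := by
  have hdn : d < n := hd ▸ ZMod.val_lt _
  have hm : m.val < d := ZMod.val_lt m
  have hsucc : (m + 1).val = (m.val + 1) % d := by
    rw [ZMod.val_add, ZMod.val_one_eq_one_mod, Nat.add_mod_mod]
  have hhit : ∀ s', w (s + 1 + m.val) = w s' → m.val + 1 = (s' - s).val := by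
    intro s' h
    have hsub : s + 1 + (m.val : ZMod n) - s = ((m.val + 1 : ℕ) : ZMod n) := by push_cast; ring
    rw [← hw h, hsub, ZMod.val_cast_of_lt (by omega)]
  rcases (show m.val + 1 ≤ d from hm).lt_or_eq with hlt | heq
  · have hs : w (s + 1 + m.val) ≠ w s := fun h => by simpa using hhit s h
    have ht : w (s + 1 + m.val) ≠ w t := fun h => by have := hhit t h; omega
    rw [comp_apply, swap_apply_of_ne_of_ne hs ht, ← hχ, hsucc, Nat.mod_eq_of_lt hlt]
    push_cast
    ring_nf
  · have hend : s + 1 + (m.val : ZMod n) = t := by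
      have h : ((m.val + 1 : ℕ) : ZMod n) = t - s := by rw [heq, ← hd, ZMod.natCast_zmod_val]
      push_cast at h
      linear_combination h
    rw [comp_apply, hend, swap_apply_right, ← hχ, hsucc, heq, Nat.mod_self, Nat.cast_zero,
      add_zero]

theorem card_image_iterateOrbit_comp_swap [Fintype α] (hw : Bijective w)
    (hχ : Semiconj w (· + 1) χ) {a b : α} (hab : a ≠ b) :
    (univ.image (iterateOrbit n (χ ∘ swap a b))).card = 2 := by
  obtain ⟨s, rfl⟩ := hw.2 a
  obtain ⟨t, rfl⟩ := hw.2 b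
  have hst : s ≠ t := fun h => hab (congrArg w h)
  set π := χ ∘ swap (w s) (w t)
  set d := (t - s).val
  set d' := (s - t).val
  have : NeZero d := ⟨(ZMod.val_eq_zero _).not.2 (sub_ne_zero.2 hst.symm)⟩
  have : NeZero d' := ⟨(ZMod.val_eq_zero _).not.2 (sub_ne_zero.2 hst)⟩
  set A := univ.image fun m : ZMod d => w (s + 1 + m.val)
  set B := univ.image fun m : ZMod d' => w (t + 1 + m.val)
  have hA : ∀ m : ZMod d, iterateOrbit n π (w (s + 1 + m.val)) = A :=
    iterateOrbit_eq_image_of_cycle (ZMod.val_lt _).le (comp_swap_apply_arc hw.1 hχ rfl)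
  have hB : ∀ m : ZMod d', iterateOrbit n π (w (t + 1 + m.val)) = B := by
    have := comp_swap_apply_arc hw.1 hχ (s := t) (t := s) rfl
    simp only [swap_comm (w t)] at this
    exact iterateOrbit_eq_image_of_cycle (ZMod.val_lt _).le this
  have horbit : ∀ x, iterateOrbit n π x = A ∨ iterateOrbit n π x = B := by
    intro x
    obtain ⟨u, rfl⟩ := hw.2 x
    rcases ZMod.exists_arc_or_exists_arc hst u with ⟨k, hk, rfl⟩ | ⟨k, hk, rfl⟩
    · left
      simpa [ZMod.val_cast_of_lt hk] using hA k
    · right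
      simpa [ZMod.val_cast_of_lt hk] using hB k
  have hAB : A ≠ B := by
    intro h
    have hcover : univ ⊆ A := fun x _ => by
      rw [← (horbit x).elim id (·.trans h.symm)]
      exact mem_iterateOrbit_self (NeZero.pos n) π x
    have : n ≤ d := calc
      n = (univ : Finset α).card := by rw [card_univ, ← Fintype.card_of_bijective hw, ZMod.card]
      _ ≤ A.card := card_le_card hcover
      _ ≤ d := card_image_le.trans (by rw [card_univ, ZMod.card])
    exact (ZMod.val_lt (t - s)).not_ge this
  have himage : univ.image (iterateOrbit n π) = {A, B} := by
    ext X
    simp only [mem_image, mem_univ, true_and, mem_insert, mem_singleton]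
    constructor
    · rintro ⟨x, rfl⟩
      exact horbit x
    · rintro (rfl | rfl)
      exacts [⟨_, hA 0⟩, ⟨_, hB 0⟩]
  rw [himage, card_pair hAB]

end Orbits

theorem exists_bijective_semiconj_add_one {α : Type*} [Fintype α] {n : ℕ} [NeZero n]
    (hcard : Fintype.card α = n) {χ : α → α} (hχ : Injective χ) {x₀ : α}
    (hcyc : ∀ y, ∃ r < n, χ^[r] x₀ = y) :
    ∃ w : ZMod n → α, Bijective w ∧ Semiconj w (· + 1) χ := by
  set w : ZMod n → α := fun u => χ^[u.val] x₀
  have hsurj : Surjective w := fun y => by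
    obtain ⟨r, hr, rfl⟩ := hcyc y
    exact ⟨r, by simp only [w, ZMod.val_cast_of_lt hr]⟩
  have hw : Bijective w :=
    (Fintype.bijective_iff_surjective_and_card w).2 ⟨hsurj, by simp [hcard]⟩
  have hreturn : ∀ r < n, χ^[r] x₀ = x₀ → r = 0 := fun r hr h => by
    have := hw.1 (show w r = w 0 by
      simpa only [w, ZMod.val_cast_of_lt hr, ZMod.val_zero, iterate_zero_apply] using h)
    simpa [ZMod.val_cast_of_lt hr] using congrArg ZMod.val this
  have hperiod : χ^[n] x₀ = x₀ := by
    obtain ⟨v, hv⟩ := hsurj (χ^[n] x₀)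
    have hvn : v.val < n := ZMod.val_lt v
    rcases Nat.eq_zero_or_pos v.val with h0 | hpos
    · simpa only [w, h0, iterate_zero_apply] using hv.symm
    · have hback : χ^[n - v.val] x₀ = x₀ := by
        refine hχ.iterate v.val ?_
        rw [← iterate_add_apply, Nat.add_sub_cancel' hvn.le]
        exact hv.symm
      exact absurd (hreturn _ (by omega) hback) (by omega)
  refine ⟨w, hw, fun u => ?_⟩
  simp only [w, ← iterate_succ_apply' χ, ZMod.val_add, ZMod.val_one_eq_one_mod, Nat.add_mod_mod,
    IsPeriodicPt.iterate_mod_apply hperiod]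

section Reduction

variable {n : ℕ}

lemma apply_add_mul_of_equivariant {u : ℤ → ℤ} (hu : ∀ m, u (m + n) = u m + n) (m c : ℤ) :
    u (m + c * n) = u m + c * n := by
  have hper : Periodic (fun m => u m - m) (n : ℤ) := fun m => by
    simp only [hu]; ring
  have : u (m + c * n) - (m + c * n) = u m - m := hper.int_mul c m
  linarith

/-- The reduction `f̄` of `u` modulo `n`, meaningful when `u (m + n) = u m + n`. -/
def reduceMod (n : ℕ) (u : ℤ → ℤ) : ZMod n → ZMod n := fun x => (u x.val : ZMod n)

variable [NeZero n] {u : ℤ → ℤ}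

lemma reduceMod_intCast (hu : ∀ m, u (m + n) = u m + n) (m : ℤ) :
    reduceMod n u m = (u m : ZMod n) := by
  have hm : ((m : ZMod n).val : ℤ) + m / n * n = m := by
    rw [ZMod.val_intCast]
    exact Int.emod_add_ediv_mul m n
  conv_rhs => rw [← hm, apply_add_mul_of_equivariant hu]
  simp [reduceMod]

lemma reduceMod_iterate_intCast (hu : ∀ m, u (m + n) = u m + n) (r : ℕ) (m : ℤ) :
    (reduceMod n u)^[r] m = (u^[r] m : ZMod n) := by
  induction r with
  | zero => rfl
  | succ r ih => rw [iterate_succ_apply', iterate_succ_apply', ih, reduceMod_intCast hu]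

lemma numCycles_eq_card_image_iterateOrbit (hu : ∀ m, u (m + n) = u m + n) :
    numCycles n u = (univ.image (iterateOrbit n (reduceMod n u))).card := by
  have horbit : ∀ m : ℤ, orbitF n u m =
      (iterateOrbit n (reduceMod n u) m).image fun z => (z.val : ℤ) := fun m => by
    simp only [orbitF, iterateOrbit, image_image, comp_def, reduceMod_iterate_intCast hu,
      ZMod.val_intCast]
  have hval : Injective fun z : ZMod n => (z.val : ℤ) :=
    fun x y h => ZMod.val_injective n (Int.natCast_inj.1 h)
  have hrange : (range n).image (fun a : ℕ => ((a : ℤ) : ZMod n)) = univ :=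
    eq_univ_of_forall fun x =>
      mem_image.2 ⟨x.val, mem_range.2 x.val_lt, by simp⟩
  rw [numCycles, ← card_image_of_injective _ (image_injective hval), ← hrange, image_image,
    image_image]
  simp only [comp_def, horbit]

lemma reduceMod_surjective (hu : ∀ m, u (m + n) = u m + n) (hsurj : Surjective u) :
    Surjective (reduceMod n u) := fun y => by
  obtain ⟨m, hm⟩ := hsurj y.val
  exact ⟨m, by rw [reduceMod_intCast hu, hm]; simp⟩

lemma exists_iterate_reduceMod_eq (hu : ∀ m, u (m + n) = u m + n) (hcyc : IsCycleMod n u)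
    (y : ZMod n) : ∃ r < n, (reduceMod n u)^[r] 0 = y := by
  obtain ⟨r, hr, hry⟩ := hcyc y.val
  refine ⟨r, hr, ?_⟩
  rw [← Int.cast_zero, reduceMod_iterate_intCast hu, ← ZMod.natCast_zmod_val y,
    ← Int.cast_natCast, ZMod.intCast_eq_intCast_iff']
  exact hry

end Reduction

section Resolve

variable {n : ℕ} {f : ℤ → ℤ} {i j : ℤ}

lemma resolve_equivariant (hf : ∀ m, f (m + n) = f m + n) (m : ℤ) :
    resolve n f i j (m + n) = resolve n f i j m + n := by
  simp only [resolve, Int.add_emod_right]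
  split_ifs
  · ring
  · ring
  · exact hf m

lemma intCast_ne_of_inversion (hf : ∀ m, f (m + n) = f m + n) (hlt : i < j) (hfij : f j < f i) :
    (i : ZMod n) ≠ j := by
  rw [Ne, ZMod.intCast_eq_intCast_iff_dvd_sub]
  rintro ⟨c, hc⟩
  have : f j = f i + (j - i) := by
    rw [show j = i + c * n by linarith, apply_add_mul_of_equivariant hf]
    ring
  linarith

lemma reduceMod_resolve [NeZero n] (hf : ∀ m, f (m + n) = f m + n) :
    reduceMod n (resolve n f i j) = reduceMod n f ∘ swap (i : ZMod n) j := by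
  have hres := reduceMod_intCast (resolve_equivariant (i := i) (j := j) hf)
  ext x
  obtain ⟨m, rfl⟩ := ZMod.intCast_surjective x
  have hmodi := ZMod.intCast_eq_intCast_iff' m i n
  have hmodj := ZMod.intCast_eq_intCast_iff' m j n
  rw [hres, comp_apply, swap_apply_def, resolve]
  by_cases hi : (m : ZMod n) = i
  · rw [if_pos (hmodi.1 hi), if_pos hi, reduceMod_intCast hf]
    push_cast
    rw [hi, sub_self, add_zero]
  by_cases hj : (m : ZMod n) = j
  · rw [if_neg (mt hmodi.2 hi), if_pos (hmodj.1 hj), if_neg hi, if_pos hj, reduceMod_intCast hf]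
    push_cast
    rw [hj, sub_self, add_zero]
  rw [if_neg (mt hmodi.2 hi), if_neg (mt hmodj.2 hj), if_neg hi, if_neg hj, reduceMod_intCast hf]

end Resolve

/-- For `f ∈ Θ_{k,n}` and an inversion `(i,j)` of `f`, the permutation
obtained by resolving the crossing is a product of exactly two disjoint cycles. -/
theorem positroid_stmt6 (k n : ℕ) (f : ℤ → ℤ) (hf : IsTheta k n f) (i j : ℤ)
    (hij : (i, j) ∈ inversions n f) :
    numCycles n (resolve n f i j) = 2 := by
  obtain ⟨⟨⟨hbij, hper⟩, -⟩, hcyc, -⟩ := hf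
  simp only [inversions, mem_filter, mem_product, mem_Icc] at hij
  obtain ⟨⟨⟨hi, hin⟩, -⟩, hlt, hfij⟩ := hij
  have : NeZero n := ⟨by omega⟩
  have hne := intCast_ne_of_inversion hper hlt hfij
  obtain ⟨w, hw, hshift⟩ := exists_bijective_semiconj_add_one (ZMod.card n)
    (Finite.injective_iff_surjective.2 (reduceMod_surjective hper hbij.2))
    (exists_iterate_reduceMod_eq hper hcyc)
  rw [numCycles_eq_card_image_iterateOrbit (resolve_equivariant hper), reduceMod_resolve hper]
  exact card_image_iterateOrbit_comp_swap hw hshift hne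
end

section
/- For any f ∈ Θ_{k,n} and any inversion (i,j) of f, the winding data of the two resolved cycles adds up to that of f: if the two cycles of f̄^{(i,j)} (viewed, via order-preserving relabeling of their supports, as full-cycle permutations in S_{n_1} and S_{n_2}) have winding numbers k_1, k_2, then k_1 + k_2 = k and n_1 + n_2 = n. -/
open Finset

/-!
Write `f̄` for `f` modulo `n` and `p s = f̄^[s] j̄`. As `f̄` is an `n`-cycle, `p` enumerates the
residues with period `n`, and `ī = p u` with `0 < u < n`. Resolving the crossing composes `f̄`
with the transposition `(ī j̄)`, which cuts the cycle into `p(0, u]` and `p(u, n]`; hence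
`n₁ + n₂ = n`.

For the winding numbers, count the arcs `m ↦ g m` jumping over a cut. For a bounded affine
permutation of period `d`, `d` times this number is the displacement `∑ (g m - m)` over a period,
so it does not depend on the cut. Reading `k₁` at the cut of the relabelled cycle lying over the
cut at `n` shows that `k₁` counts the arcs of `g = f^{(i,j)}` that start in the first cycle and
cross `n`, and similarly for `k₂`; so `k₁ + k₂ = k(g)`. Finally, a cut just above `j` is crossed
by the same number of arcs of `g` and of `f`, because the two swapped arcs `i ↦ f j` and `j ↦ f i`
both start below it.
-/

theorem Int.eq_of_emod_eq_of_mem_Ico {c a b k : ℤ} (ha : a ∈ Ico c (c + k))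
    (hb : b ∈ Ico c (c + k)) (h : a % k = b % k) : a = b := by
  rw [mem_Ico] at ha hb
  have := Int.eq_zero_of_abs_lt_dvd (Int.ModEq.dvd h) (abs_sub_lt_iff.mpr ⟨by omega, by omega⟩)
  omega

theorem Int.emod_ne_emod_of_lt_of_lt_add {a b k : ℤ} (hab : a < b) (hb : b < a + k) :
    a % k ≠ b % k := fun h =>
  hab.ne (Int.eq_of_emod_eq_of_mem_Ico (mem_Ico.mpr ⟨le_rfl, by omega⟩)
    (mem_Ico.mpr ⟨hab.le, hb⟩) h)

theorem Int.add_sub_emod_of_emod_eq {a x y k : ℤ} (h : x % k = y % k) :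
    (a + (x - y)) % k = a % k := by
  obtain ⟨t, ht⟩ := Int.ModEq.dvd h.symm
  rw [ht, Int.add_mul_emod_self_left]

namespace Function.IsPeriodicPt

variable {α : Type*} [DecidableEq α] {h : α → α} {x : α} {L : ℕ}

theorem image_range_iterate (hx : IsPeriodicPt h L x) (hL : 0 < L) {N : ℕ} (hLN : L ≤ N) :
    (range N).image (h^[·] x) = (Ioc 0 L).image (h^[·] x) := by
  ext y
  simp only [mem_image, mem_range, mem_Ioc]
  constructor
  · rintro ⟨r, -, rfl⟩
    rcases Nat.eq_zero_or_pos (r % L) with h0 | h0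
    · refine ⟨L, ⟨hL, le_rfl⟩, ?_⟩
      rw [hx.eq, ← hx.iterate_mod_apply r, h0, iterate_zero_apply]
    · exact ⟨r % L, ⟨h0, (Nat.mod_lt _ hL).le⟩, hx.iterate_mod_apply r⟩
  · rintro ⟨s, -, rfl⟩
    exact ⟨s % L, (Nat.mod_lt _ hL).trans_le hLN, hx.iterate_mod_apply s⟩

theorem apply_mem_image_Ioc_iterate (hx : IsPeriodicPt h L x) {y : α}
    (hy : y ∈ (Ioc 0 L).image (h^[·] x)) : h y ∈ (Ioc 0 L).image (h^[·] x) := by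
  obtain ⟨s, hs, rfl⟩ := mem_image.mp hy
  rw [mem_Ioc] at hs
  rw [mem_image]
  rcases hs.2.lt_or_eq with hlt | rfl
  · exact ⟨s + 1, mem_Ioc.mpr ⟨s.succ_pos, hlt⟩, iterate_succ_apply' _ _ _⟩
  · exact ⟨1, mem_Ioc.mpr ⟨zero_lt_one, hs.1⟩, by rw [hx.eq, iterate_one]⟩

end Function.IsPeriodicPt

namespace Function

variable {α : Type*} {h : α → α} {p : ℕ → α} {b c : ℕ}

theorem iterate_sub_apply_eq_of_step (hc : h (p c) = p (b + 1))
    (hstep : ∀ s, b < s → s < c → h (p s) = p (s + 1)) {s : ℕ} (hbs : b < s)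
    (hsc : s ≤ c) : h^[s - b] (p c) = p s := by
  induction s, hbs using Nat.le_induction with
  | base => rwa [show b.succ - b = 1 by omega, iterate_one]
  | succ s hbs ih =>
    rw [Nat.sub_add_comm (Nat.le_of_succ_le hbs), iterate_succ_apply', ih (by omega),
      hstep s hbs (by omega)]

theorem image_Ioc_iterate_eq_of_step [DecidableEq α] (hc : h (p c) = p (b + 1))
    (hstep : ∀ s, b < s → s < c → h (p s) = p (s + 1)) :
    (Ioc 0 (c - b)).image (h^[·] (p c)) = (Ioc b c).image p := by
  ext y
  simp only [mem_image, mem_Ioc]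
  constructor
  · rintro ⟨r, hr, rfl⟩
    refine ⟨b + r, by omega, ?_⟩
    rw [← iterate_sub_apply_eq_of_step hc hstep (by omega) (by omega), Nat.add_sub_cancel_left]
  · rintro ⟨s, hs, rfl⟩
    exact ⟨s - b, by omega, iterate_sub_apply_eq_of_step hc hstep hs.1 hs.2⟩

end Function

theorem Function.Periodic.sum_Ico_eq {M : Type*} [AddCommMonoid M] {D : ℤ → M} {d : ℤ}
    (hD : Periodic D d) (hd : 0 ≤ d) (a : ℤ) :
    ∑ m ∈ Ico a (a + d), D m = ∑ m ∈ Ico 0 d, D m := by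
  rw [← Int.image_Ico_emod a d hd, sum_image fun x hx y hy h =>
    Int.eq_of_emod_eq_of_mem_Ico hx hy h]
  refine sum_congr rfl fun m _ => ?_
  rw [Int.emod_def, mul_comm, ← hD.sub_int_mul_eq (m / d), Int.cast_id]

namespace Positroid

open Function

section QuasiPeriodic

variable {d n : ℕ}

theorem apply_add_mul_eq {φ : ℤ → ℤ} (hφ : ∀ m, φ (m + d) = φ m + n) (t m : ℤ) :
    φ (m + t * d) = φ m + t * n := by
  induction t using Int.induction_on with
  | zero => simp
  | succ t ih => rw [add_one_mul, ← add_assoc, hφ, ih, add_one_mul, add_assoc]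
  | pred t ih =>
    have h := hφ (m + (-t - 1) * d)
    rw [show m + (-t - 1) * d + d = m + -t * d by ring, ih] at h
    linear_combination -h

variable {g : ℤ → ℤ}

theorem apply_eq_of_emod_eq (hg : ∀ m, g (m + n) = g m + n) {x y : ℤ} (h : x % n = y % n) :
    g x = g y + (x - y) := by
  obtain ⟨t, ht⟩ := Int.ModEq.dvd h.symm
  rw [show x = y + t * n by linear_combination ht, apply_add_mul_eq hg]
  ring

theorem emod_apply_eq_of_emod_eq (hg : ∀ m, g (m + n) = g m + n) {x y : ℤ}
    (h : x % n = y % n) : g x % n = g y % n := by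
  obtain ⟨t, ht⟩ := Int.ModEq.dvd h.symm
  rw [apply_eq_of_emod_eq hg h, ht, Int.add_mul_emod_self_left]

theorem emod_eq_of_emod_apply_eq (hg : ∀ m, g (m + n) = g m + n) (hinj : Injective g)
    {x y : ℤ} (h : g x % n = g y % n) : x % n = y % n := by
  obtain ⟨t, ht⟩ := Int.ModEq.dvd h.symm
  have : g x = g (y + t * n) := by rw [apply_add_mul_eq hg]; linear_combination ht
  rw [hinj this, Int.add_mul_emod_self_right]

end QuasiPeriodic

section Residues

variable {n : ℕ} {g : ℤ → ℤ}

/-- The map `ḡ` on the residues `0 ≤ x < n`. -/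
def modMap (n : ℕ) (g : ℤ → ℤ) (x : ℤ) : ℤ := g x % n

theorem modMap_mem_Ico (hn : 0 < n) (x : ℤ) : modMap n g x ∈ Set.Ico 0 (n : ℤ) :=
  ⟨Int.emod_nonneg _ (by omega), Int.emod_lt_of_pos _ (by omega)⟩

theorem modMap_emod (hg : ∀ m, g (m + n) = g m + n) (x : ℤ) :
    modMap n g (x % n) = g x % n :=
  emod_apply_eq_of_emod_eq hg (Int.emod_emod _ _)

theorem iterate_emod (hg : ∀ m, g (m + n) = g m + n) (a : ℤ) (r : ℕ) :
    g^[r] a % n = (modMap n g)^[r] (a % n) := by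
  induction r with
  | zero => rfl
  | succ r ih => rw [iterate_succ_apply', iterate_succ_apply', ← ih, modMap_emod hg]

theorem orbitF_eq_image_iterate (hg : ∀ m, g (m + n) = g m + n) (a : ℤ) :
    orbitF n g a = (range n).image fun r => (modMap n g)^[r] (a % n) := by
  simp only [orbitF, iterate_emod hg]

theorem injOn_modMap (hg : ∀ m, g (m + n) = g m + n) (hinj : Injective g) :
    Set.InjOn (modMap n g) (Set.Ico 0 (n : ℤ)) := fun x hx y hy hxy => by
  have := emod_eq_of_emod_apply_eq hg hinj hxy
  rwa [Int.emod_eq_of_lt hx.1 hx.2, Int.emod_eq_of_lt hy.1 hy.2] at this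

/-- Pigeonhole on the `n + 1` points `ḡ^[r] (a % n)`, `r ≤ n`. -/
theorem exists_isPeriodicPt_modMap (hn : 0 < n) (hg : ∀ m, g (m + n) = g m + n)
    (hinj : Injective g) (a : ℤ) :
    ∃ L, 0 < L ∧ L ≤ n ∧ IsPeriodicPt (modMap n g) L (a % n) := by
  have hmaps : Set.MapsTo (modMap n g) (Set.Ico 0 (n : ℤ)) (Set.Ico 0 (n : ℤ)) :=
    fun x _ => modMap_mem_Ico hn x
  have ha : a % n ∈ Set.Ico 0 (n : ℤ) :=
    ⟨Int.emod_nonneg _ (by omega), Int.emod_lt_of_pos _ (by omega)⟩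
  obtain ⟨r, hr, s, hs, hrs, hrs'⟩ :=
    exists_ne_map_eq_of_card_lt_of_maps_to (s := range (n + 1))
      (t := Ico 0 (n : ℤ)) (f := fun r => (modMap n g)^[r] (a % n))
      (by simp) (fun r _ => by simpa using hmaps.iterate r ha)
  simp only [mem_range] at hr hs
  wlog hlt : r < s generalizing r s
  · exact this s r hrs.symm hrs'.symm hs hr (by omega)
  refine ⟨s - r, by omega, by omega, (injOn_modMap hg hinj).iterate hmaps r
    ((hmaps.iterate _) ha) ha ?_⟩
  rwa [← iterate_add_apply, Nat.add_sub_cancel' hlt.le, eq_comm]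

end Residues

section Orbits

variable {n : ℕ} {g : ℤ → ℤ}

theorem emod_apply_mem_orbitF (hn : 0 < n) (hg : ∀ m, g (m + n) = g m + n) (hinj : Injective g)
    {a m : ℤ} (hm : m % n ∈ orbitF n g a) : g m % n ∈ orbitF n g a := by
  obtain ⟨L, hL, hLn, hper⟩ := exists_isPeriodicPt_modMap hn hg hinj a
  rw [orbitF_eq_image_iterate hg, hper.image_range_iterate hL hLn] at hm ⊢
  rw [← modMap_emod hg]
  exact hper.apply_mem_image_Ioc_iterate hm

theorem minimalPeriod_modMap (hn : 0 < n) (hg : ∀ m, g (m + n) = g m + n) (hinj : Injective g)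
    (hcyc : IsCycleMod n g) (x : ℤ) : minimalPeriod (modMap n g) (x % n) = n := by
  have hcyc' : ∀ x : ℤ, ∃ r < n, (modMap n g)^[r] 0 = x % n := fun x => by
    simpa [iterate_emod hg] using hcyc x
  have hinjOn : Set.InjOn (fun r => (modMap n g)^[r] 0) (range n) := by
    refine injOn_of_card_image_eq (le_antisymm card_image_le ?_)
    calc (range n).card = (Ico 0 (n : ℤ)).card := by simp
      _ ≤ _ := card_le_card fun y hy => by
        obtain ⟨r, hr, hry⟩ := hcyc' y
        rw [mem_Ico] at hy
        rw [Int.emod_eq_of_lt hy.1 hy.2] at hry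
        exact mem_image.mpr ⟨r, mem_range.mpr hr, hry⟩
  obtain ⟨L, hL, hLn, hper⟩ := exists_isPeriodicPt_modMap hn hg hinj 0
  rw [Int.zero_emod] at hper
  have hperiod : minimalPeriod (modMap n g) 0 = n := by
    refine le_antisymm ((hper.minimalPeriod_le hL).trans hLn) (not_lt.mp fun hlt => ?_)
    exact (hper.minimalPeriod_pos hL).ne' (hinjOn (mem_range.mpr hlt)
      (mem_range.mpr hn) (iterate_minimalPeriod.trans (iterate_zero_apply _ _).symm))
  obtain ⟨r, -, hr⟩ := hcyc' x
  rw [← hr, minimalPeriod_apply_iterate (mk_mem_periodicPts hL hper), hperiod]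

theorem iterate_modMap_self (hn : 0 < n) (hg : ∀ m, g (m + n) = g m + n) (hinj : Injective g)
    (hcyc : IsCycleMod n g) (x : ℤ) : (modMap n g)^[n] (x % n) = x % n := by
  have := iterate_minimalPeriod (f := modMap n g) (x := x % n)
  rwa [minimalPeriod_modMap hn hg hinj hcyc] at this

theorem eq_of_iterate_modMap_eq (hn : 0 < n) (hg : ∀ m, g (m + n) = g m + n)
    (hinj : Injective g) (hcyc : IsCycleMod n g) (x : ℤ) {a b : ℕ} (hab : a ≤ b)
    (hb : b < a + n) (h : (modMap n g)^[a] (x % n) = (modMap n g)^[b] (x % n)) : a = b := by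
  by_contra hne
  have hper : IsPeriodicPt (modMap n g) (b - a) ((modMap n g)^[a] (x % n)) := by
    rw [IsPeriodicPt, IsFixedPt, ← iterate_add_apply, Nat.sub_add_cancel hab]
    exact h.symm
  have := hper.minimalPeriod_le (by omega)
  rw [← iterate_emod hg, minimalPeriod_modMap hn hg hinj hcyc] at this
  omega

theorem image_Ioc_iterate_modMap (hn : 0 < n) (hg : ∀ m, g (m + n) = g m + n)
    (hinj : Injective g) (hcyc : IsCycleMod n g) (x : ℤ) :
    (Ioc 0 n).image (fun s => (modMap n g)^[s] (x % n)) = Ico 0 (n : ℤ) := by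
  refine eq_of_subset_of_card_le (fun y hy => ?_) ?_
  · obtain ⟨s, -, rfl⟩ := mem_image.mp hy
    rw [← iterate_emod hg, mem_Ico]
    exact ⟨Int.emod_nonneg _ (by omega), Int.emod_lt_of_pos _ (by omega)⟩
  · rw [card_image_of_injOn fun a ha b hb h => ?_]
    · simp
    · simp only [coe_Ioc, Set.mem_Ioc] at ha hb
      rcases le_total a b with hab | hba
      · exact eq_of_iterate_modMap_eq hn hg hinj hcyc x hab (by omega) h
      · exact (eq_of_iterate_modMap_eq hn hg hinj hcyc x hba (by omega) h.symm).symm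

end Orbits

section Cuts

variable {d : ℕ} {h : ℤ → ℤ}

/-- Arcs `m ↦ h m` jumping over the cut below `c`; when `m ≤ h m ≤ m + d`, all of them start
in the window `[c - d, c)`. -/
noncomputable def cutCount (d : ℕ) (h : ℤ → ℤ) (c : ℤ) : ℕ :=
  ((Ico (c - d) c).filter fun m => c ≤ h m).card

/-- Reducing `h m` into the window `W = [c - d, c)` permutes `W`; the arcs crossing `c` are
exactly those reduced by `d`. -/
theorem cutCount_mul_eq_sum (hper : ∀ m, h (m + d) = h m + d) (hbd : IsBoundedFn d h)
    (hinj : Injective h) (c : ℤ) :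
    (cutCount d h c : ℤ) * d = ∑ m ∈ Ico (c - d) c, (h m - m) := by
  set W := Ico (c - d) c
  set ρ : ℤ → ℤ := fun m => if c ≤ h m then h m - d else h m
  have hmaps : Set.MapsTo ρ W W := fun m hm => by
    have := hbd m
    simp only [W, coe_Ico, Set.mem_Ico, ρ] at hm ⊢
    split_ifs <;> omega
  have hinjOn : Set.InjOn ρ W := fun a ha b hb hab => by
    have hρ : ∀ m, ρ m % d = h m % d := fun m => by
      simp only [ρ]
      split_ifs
      · exact Int.sub_emod_right _ _
      · rfl
    have hW : W = Ico (c - d) (c - d + d) := by rw [sub_add_cancel]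
    rw [mem_coe, hW] at ha hb
    exact Int.eq_of_emod_eq_of_mem_Ico ha hb
      (emod_eq_of_emod_apply_eq hper hinj (by rw [← hρ, ← hρ, hab]))
  have hsum : ∑ m ∈ W, ρ m = ∑ m ∈ W, m := sum_nbij ρ hmaps hinjOn
    (surjOn_of_injOn_of_card_le ρ hmaps hinjOn le_rfl) fun _ _ => rfl
  calc (cutCount d h c : ℤ) * d = ∑ m ∈ W, if c ≤ h m then (d : ℤ) else 0 := by
        rw [← sum_filter, sum_const, nsmul_eq_mul]
        rfl
    _ = ∑ m ∈ W, (ρ m - m) + ∑ m ∈ W, if c ≤ h m then (d : ℤ) else 0 := by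
        rw [sum_sub_distrib, hsum, sub_self, zero_add]
    _ = ∑ m ∈ W, (h m - m) := by
        rw [← sum_add_distrib]
        refine sum_congr rfl fun m _ => ?_
        simp only [ρ]
        split_ifs <;> ring

theorem cutCount_eq_winding (hd : 0 < d) (hper : ∀ m, h (m + d) = h m + d)
    (hbd : IsBoundedFn d h) (hinj : Injective h) (c : ℤ) : cutCount d h c = winding d h := by
  have hD : Periodic (fun m => h m - m) (d : ℤ) := fun m => by
    simp only [hper]
    ring
  have key : ∀ c, (cutCount d h c : ℤ) * d = ∑ m ∈ Ico 0 (d : ℤ), (h m - m) := fun c => by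
    rw [cutCount_mul_eq_sum hper hbd hinj, ← hD.sum_Ico_eq (by omega) (c - d), sub_add_cancel]
  have hwinding : winding d h = cutCount d h (d + 1) := by
    unfold winding cutCount
    congr 1
    ext m
    simp only [mem_filter, mem_Icc, mem_Ico]
    omega
  rw [hwinding]
  exact_mod_cast mul_right_cancel₀ (by omega : (d : ℤ) ≠ 0) ((key c).trans (key _).symm)

end Cuts

noncomputable def windingOn (n : ℕ) (g : ℤ → ℤ) (O : Finset ℤ) : ℕ :=
  ((Icc 1 (n : ℤ)).filter fun t => t % (n : ℤ) ∈ O ∧ (n : ℤ) < g t).card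

section Relabel

variable {n d : ℕ} {φ : ℤ → ℤ}

theorem exists_apply_le_iff_lt (hn : 0 < n) (hφ : StrictMono φ)
    (hper : ∀ m, φ (m + d) = φ m + n) (b : ℤ) : ∃ c, ∀ x, φ x ≤ b ↔ x < c := by
  set t : ℤ := |φ 0| + |b| + 1
  have hlow : φ (0 + -t * d) < b := by
    rw [apply_add_mul_eq hper]
    nlinarith [abs_nonneg (φ 0), le_abs_self (φ 0), neg_abs_le b, abs_nonneg b]
  have hhigh : b < φ (0 + t * d) := by
    rw [apply_add_mul_eq hper]
    nlinarith [abs_nonneg (φ 0), neg_abs_le (φ 0), le_abs_self b, abs_nonneg b]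
  obtain ⟨c, hc, hleast⟩ := Int.exists_least_of_bdd (P := fun z => b < φ z)
    ⟨0 + -t * d, fun z hz => not_lt.mp fun hlt => lt_asymm (hz.trans (hφ hlt)) hlow⟩
    ⟨_, hhigh⟩
  exact ⟨c, fun x => ⟨fun hx => not_le.mp fun hcx => (hc.trans_le (hφ.monotone hcx)).not_ge hx,
    fun hx => not_lt.mp fun hbx => (hleast x hbx).not_gt hx⟩⟩

variable {g g₁ : ℤ → ℤ} {O : Finset ℤ}

theorem cutCount_of_relabel (hφ : StrictMono φ) (hper : ∀ m, φ (m + d) = φ m + n)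
    (hrange : Set.range φ = {m : ℤ | m % (n : ℤ) ∈ O})
    (hconj : ∀ m, g (φ m) = φ (g₁ m)) {c : ℤ} (hc : ∀ x, φ x ≤ n ↔ x < c) :
    cutCount d g₁ c = windingOn n g O := by
  have hmem : ∀ m, (m ∈ Ico (c - d) c ∧ c ≤ g₁ m) ↔
      (φ m ∈ Icc 1 (n : ℤ) ∧ n < g (φ m)) := fun m => by
    have h1 := hc m
    have h2 := hc (m + d)
    have h3 := hc (g₁ m)
    rw [hper] at h2
    rw [hconj, mem_Ico, mem_Icc]
    constructor
    · rintro ⟨⟨hlo, hhi⟩, hcut⟩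
      exact ⟨⟨by by_contra; have := h2.mp (by omega); omega, h1.mpr hhi⟩,
        not_le.mp fun h => (h3.mp h).not_ge hcut⟩
    · rintro ⟨⟨hlo, hhi⟩, hcut⟩
      exact ⟨⟨not_lt.mp fun h => by have := h2.mpr (by omega); omega, h1.mp hhi⟩,
        not_lt.mp fun h => (h3.mpr h).not_gt hcut⟩
  unfold cutCount
  refine card_nbij φ (fun m hm => ?_) hφ.injective.injOn (fun t ht => ?_)
  · rw [mem_coe, mem_filter] at hm ⊢
    have hφm : φ m % n ∈ O := hrange.subset ⟨m, rfl⟩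
    exact ⟨((hmem m).mp hm).1, hφm, ((hmem m).mp hm).2⟩
  · rw [mem_coe, mem_filter] at ht
    obtain ⟨m, rfl⟩ : t ∈ Set.range φ := hrange.superset ht.2.1
    exact ⟨m, mem_filter.mpr ((hmem m).mpr ⟨ht.1, ht.2.2⟩), rfl⟩

theorem winding_of_isRelabelOn (hn : 0 < n) (hd : 0 < d) (hg : ∀ m, g (m + n) = g m + n)
    (hbd : IsBoundedFn n g) (hinj : Injective g)
    (hrel : IsRelabelOn n g {m : ℤ | m % (n : ℤ) ∈ O} d g₁) :
    winding d g₁ = windingOn n g O := by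
  obtain ⟨φ, hφ, hper, hrange, hconj⟩ := hrel
  have hper₁ : ∀ m, g₁ (m + d) = g₁ m + d := fun m => hφ.injective <| by
    rw [← hconj, hper, hg, hconj, hper]
  have hbd₁ : IsBoundedFn d g₁ := fun m => by
    have := hbd (φ m)
    rw [hconj, ← hper] at this
    exact ⟨hφ.le_iff_le.mp this.1, hφ.le_iff_le.mp this.2⟩
  have hinj₁ : Injective g₁ := fun a b hab =>
    hφ.injective (hinj (by rw [hconj, hconj, hab]))
  obtain ⟨c, hc⟩ := exists_apply_le_iff_lt hn hφ hper n
  rw [← cutCount_eq_winding hd hper₁ hbd₁ hinj₁ c,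
    cutCount_of_relabel hφ hper hrange hconj hc]

theorem strictMono_add_ediv_mul (hd : 0 < d) {e : ℤ → ℤ}
    (he : StrictMonoOn e (Set.Ico 0 (d : ℤ))) (he_mem : ∀ r, e r ∈ Ico 0 (n : ℤ))
    (he_emod : ∀ m, e (m % d) = e m) :
    StrictMono fun m => e m + m / d * n := fun a b hab => by
  have ha := mem_Ico.mp (he_mem a)
  have hb := mem_Ico.mp (he_mem b)
  rcases (Int.ediv_le_ediv (c := d) (by omega) hab.le).lt_or_eq with hq | hq
  · have : (a / d + 1) * n ≤ b / d * n := mul_le_mul_of_nonneg_right hq (by omega)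
    simp only
    linarith
  · have := Int.mul_ediv_add_emod a d
    have := Int.mul_ediv_add_emod b d
    have hlt : a % d < b % d := by rw [hq] at *; linarith
    have hmem : ∀ m : ℤ, m % d ∈ Set.Ico 0 (d : ℤ) := fun m =>
      ⟨Int.emod_nonneg _ (by omega), Int.emod_lt_of_pos _ (by omega)⟩
    have := he (hmem a) (hmem b) hlt
    rw [he_emod, he_emod] at this
    simp only [hq]
    linarith

/-- The increasing enumeration of `{m | m % n ∈ O}`: `φ (q * d + r) = e r + q * n`, where `e`
enumerates `O` increasingly. -/
theorem exists_strictMono_range_eq (hO : O ⊆ Ico 0 (n : ℤ))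
    (hne : O.Nonempty) : ∃ φ : ℤ → ℤ, StrictMono φ ∧ (∀ m, φ (m + O.card) = φ m + n) ∧
      Set.range φ = {m : ℤ | m % (n : ℤ) ∈ O} := by
  obtain ⟨d, hdO⟩ : ∃ d, O.card = d := ⟨_, rfl⟩
  rw [hdO]
  have hd : 0 < d := hdO ▸ card_pos.mpr hne
  set E := O.orderEmbOfFin hdO
  let e : ℤ → ℤ := fun r => E ⟨(r % d).toNat, by
    have := Int.emod_nonneg r (by omega : (d : ℤ) ≠ 0)
    have := Int.emod_lt_of_pos r (by omega : (0 : ℤ) < d)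
    omega⟩
  have he_mem : ∀ r, e r ∈ Ico 0 (n : ℤ) := fun r => hO (O.orderEmbOfFin_mem hdO _)
  have he_emod : ∀ m, e (m % d) = e m := fun m => by simp only [e, Int.emod_emod]
  have he_small : ∀ (r : ℤ) (h₀ : 0 ≤ r) (h₁ : r < d), e r = E ⟨r.toNat, by omega⟩ :=
    fun r h₀ h₁ => by simp only [e, Int.emod_eq_of_lt h₀ h₁]
  have he : StrictMonoOn e (Set.Ico 0 (d : ℤ)) := fun r ⟨hr₀, hrd⟩ s ⟨hs₀, hsd⟩ hrs => by
    rw [he_small r hr₀ hrd, he_small s hs₀ hsd]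
    exact E.strictMono (Fin.mk_lt_mk.mpr (by omega))
  refine ⟨fun m => e m + m / d * n, strictMono_add_ediv_mul hd he he_mem he_emod,
    fun m => ?_, ?_⟩
  · simp only
    rw [← he_emod (m + d), Int.add_emod_right, he_emod,
      Int.add_ediv_of_dvd_right (dvd_refl (d : ℤ)), Int.ediv_self (by omega)]
    ring
  · ext t
    simp only [Set.mem_range, Set.mem_ofPred_eq]
    constructor
    · rintro ⟨m, rfl⟩
      have := mem_Ico.mp (he_mem m)
      rw [Int.add_mul_emod_self_right, Int.emod_eq_of_lt this.1 this.2]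
      exact O.orderEmbOfFin_mem hdO _
    · intro ht
      obtain ⟨r, hr⟩ : t % n ∈ Set.range E := by rwa [range_orderEmbOfFin]
      have hr₀ : (0 : ℤ) ≤ r := by omega
      have hrd : (r : ℤ) < d := by exact_mod_cast r.isLt
      refine ⟨r + t / n * d, ?_⟩
      have hq : (r + t / n * d) / d = t / n := by
        rw [Int.add_mul_ediv_right _ _ (by omega), Int.ediv_eq_zero_of_lt hr₀ hrd, zero_add]
      have hrem : e (r + t / n * d) = t % n := by
        rw [← he_emod, Int.add_mul_emod_self_right, he_emod, he_small r hr₀ hrd, ← hr]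
        rfl
      simp only [hq, hrem]
      linear_combination Int.emod_add_mul_ediv t n

theorem exists_isRelabelOn (hO : O ⊆ Ico 0 (n : ℤ)) (hne : O.Nonempty)
    (hclosed : ∀ m, m % (n : ℤ) ∈ O → g m % (n : ℤ) ∈ O) :
    ∃ g₁, IsRelabelOn n g {m : ℤ | m % (n : ℤ) ∈ O} O.card g₁ := by
  obtain ⟨φ, hφ, hper, hrange⟩ := exists_strictMono_range_eq hO hne
  have hmem : ∀ m, g (φ m) ∈ Set.range φ := fun m => by
    rw [hrange]
    exact hclosed _ (hrange.subset ⟨m, rfl⟩)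
  exact ⟨fun m => invFun φ (g (φ m)), φ, hφ, hper, hrange,
    fun m => (invFun_eq (hmem m)).symm⟩

end Relabel

section ResParams

variable {n : ℕ} {g : ℤ → ℤ}

theorem fst_resParamsAt (hn : 0 < n) (hg : ∀ m, g (m + n) = g m + n) (hbd : IsBoundedFn n g)
    (hinj : Injective g) (a : ℤ) : (resParamsAt n g a).1 = windingOn n g (orbitF n g a) := by
  have hO : orbitF n g a ⊆ Ico 0 (n : ℤ) := fun x hx => by
    obtain ⟨r, -, rfl⟩ := mem_image.mp hx
    exact mem_Ico.mpr ⟨Int.emod_nonneg _ (by omega), Int.emod_lt_of_pos _ (by omega)⟩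
  have hne : (orbitF n g a).Nonempty := ⟨_, mem_image_of_mem _ (mem_range.mpr hn)⟩
  have hwinding : ∀ g₁, IsRelabelOn n g {m : ℤ | m % (n : ℤ) ∈ orbitF n g a}
      (orbitF n g a).card g₁ →
        winding (orbitF n g a).card g₁ = windingOn n g (orbitF n g a) :=
    fun g₁ => winding_of_isRelabelOn hn (card_pos.mpr hne) hg hbd hinj
  obtain ⟨g₁, hg₁⟩ := exists_isRelabelOn hO hne fun m => emod_apply_mem_orbitF hn hg hinj
  rw [← hwinding g₁ hg₁]
  exact le_antisymm (Nat.sInf_le ⟨g₁, hg₁, rfl⟩) (le_csInf ⟨_, g₁, hg₁, rfl⟩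
    fun _ ⟨g₂, hg₂, hk⟩ => hk ▸ ((hwinding g₂ hg₂).trans (hwinding g₁ hg₁).symm).ge)

end ResParams

section Resolve

variable {n : ℕ} {f : ℤ → ℤ} {i j : ℤ}

theorem modMap_resolve (x : ℤ) :
    modMap n (resolve n f i j) x = if x % n = i % n then modMap n f j
      else if x % n = j % n then modMap n f i else modMap n f x := by
  unfold modMap resolve
  split_ifs with hi hj
  · exact Int.add_sub_emod_of_emod_eq hi
  · exact Int.add_sub_emod_of_emod_eq hj
  · rfl

theorem resolve_add (hf : ∀ m, f (m + n) = f m + n) (m : ℤ) :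
    resolve n f i j (m + n) = resolve n f i j m + n := by
  unfold resolve
  simp only [Int.add_emod_right]
  split_ifs
  · ring
  · ring
  · exact hf m

/-- `resolve n id i j` is the `n`-periodic transposition of the classes of `i` and `j`. -/
theorem resolve_eq_comp (hf : ∀ m, f (m + n) = f m + n) :
    resolve n f i j = f ∘ resolve n id i j := by
  ext m
  simp only [resolve, comp_apply, id]
  split_ifs with hi hj
  · rw [apply_eq_of_emod_eq hf (Int.add_sub_emod_of_emod_eq hi), add_sub_cancel_left]
  · rw [apply_eq_of_emod_eq hf (Int.add_sub_emod_of_emod_eq hj), add_sub_cancel_left]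
  · rfl

theorem resolve_id_involutive (hij : i % n ≠ j % n) : Involutive (resolve n id i j) := by
  intro m
  simp only [resolve, id]
  split_ifs <;> simp_all [Int.add_sub_emod_of_emod_eq]

theorem injective_resolve (hf : ∀ m, f (m + n) = f m + n) (hinj : Injective f)
    (hij : i % n ≠ j % n) : Injective (resolve n f i j) := by
  rw [resolve_eq_comp hf]
  exact hinj.comp (resolve_id_involutive hij).injective

theorem isBoundedFn_resolve (hbd : IsBoundedFn n f) (hij : i < j) (hfji : f j < f i) :
    IsBoundedFn n (resolve n f i j) := by
  intro m
  have := hbd i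
  have := hbd j
  have := hbd m
  unfold resolve
  split_ifs <;> omega

theorem orbitF_resolve_eq (hn : 0 < n) (hf : ∀ m, f (m + n) = f m + n) (hinj : Injective f)
    (hcyc : IsCycleMod n f) (hij : i % n ≠ j % n) {u : ℕ} (hu : 0 < u) (hun : u < n)
    (hpu : (modMap n f)^[u] (j % n) = i % n) :
    orbitF n (resolve n f i j) i = (Ioc 0 u).image (fun s => (modMap n f)^[s] (j % n)) ∧
      orbitF n (resolve n f i j) j = (Ioc u n).image (fun s => (modMap n f)^[s] (j % n)) := by
  set p : ℕ → ℤ := fun s => (modMap n f)^[s] (j % n)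
  have hp_emod : ∀ s, p s % n = p s := fun s => by
    simp only [p]
    rw [← iterate_emod hf, Int.emod_emod]
  have hpn : p n = j % n := iterate_modMap_self hn hf hinj hcyc j
  have hp_ne : ∀ {a b}, a ≤ b → b < a + n → a ≠ b → p a ≠ p b :=
    fun hab hb hne h => hne (eq_of_iterate_modMap_eq hn hf hinj hcyc j hab hb h)
  set g := resolve n f i j
  have hstep : ∀ s, 0 < s → s < n → s ≠ u → modMap n g (p s) = p (s + 1) := by
    intro s hs hsn hsu
    have hsi : p s ≠ i % n := by
      rw [← hpu]
      rcases lt_or_gt_of_ne hsu with hlt | hlt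
      · exact hp_ne hlt.le (by omega) hsu
      · exact (hp_ne hlt.le (by omega) hsu.symm).symm
    have hsj : p s ≠ j % n := hpn ▸ hp_ne hsn.le (by omega) hsn.ne
    rw [modMap_resolve, hp_emod, if_neg hsi, if_neg hsj]
    exact (iterate_succ_apply' _ _ _).symm
  have hgi : modMap n g (p u) = p (0 + 1) := by
    rw [modMap_resolve, hp_emod, if_pos hpu]
    exact (modMap_emod hf j).symm
  have hgj : modMap n g (p n) = p (u + 1) := by
    rw [modMap_resolve, hp_emod, hpn, if_neg (Ne.symm hij), if_pos rfl]
    show _ = (modMap n f)^[u + 1] _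
    rw [iterate_succ_apply', hpu, modMap_emod hf]
    rfl
  have hstep_i : ∀ s, 0 < s → s < u → modMap n g (p s) = p (s + 1) :=
    fun s hs hsu => hstep s hs (by omega) hsu.ne
  have hstep_j : ∀ s, u < s → s < n → modMap n g (p s) = p (s + 1) :=
    fun s hs hsn => hstep s (by omega) hsn hs.ne'
  have hper_i : IsPeriodicPt (modMap n g) u (p u) := by
    have h := iterate_sub_apply_eq_of_step hgi hstep_i hu le_rfl
    rwa [Nat.sub_zero] at h
  have hper_j : IsPeriodicPt (modMap n g) (n - u) (p n) :=
    iterate_sub_apply_eq_of_step hgj hstep_j hun le_rfl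
  constructor
  · rw [orbitF_eq_image_iterate (resolve_add hf), ← hpu, hper_i.image_range_iterate hu hun.le,
      ← image_Ioc_iterate_eq_of_step hgi hstep_i, Nat.sub_zero]
  · rw [orbitF_eq_image_iterate (resolve_add hf), ← hpn,
      hper_j.image_range_iterate (by omega) (by omega),
      ← image_Ioc_iterate_eq_of_step hgj hstep_j]

theorem orbitF_resolve (hn : 0 < n) (hf : ∀ m, f (m + n) = f m + n) (hinj : Injective f)
    (hcyc : IsCycleMod n f) (hij : i % n ≠ j % n) :
    Disjoint (orbitF n (resolve n f i j) i) (orbitF n (resolve n f i j) j) ∧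
      orbitF n (resolve n f i j) i ∪ orbitF n (resolve n f i j) j = Ico 0 (n : ℤ) := by
  have himage := image_Ioc_iterate_modMap hn hf hinj hcyc j
  obtain ⟨u, hu, hpu⟩ : ∃ u ∈ Ioc 0 n, (modMap n f)^[u] (j % n) = i % n := by
    rw [← mem_image, himage, mem_Ico]
    exact ⟨Int.emod_nonneg _ (by omega), Int.emod_lt_of_pos _ (by omega)⟩
  rw [mem_Ioc] at hu
  have hun : u < n := lt_of_le_of_ne hu.2 fun h =>
    hij (by rw [← hpu, h, iterate_modMap_self hn hf hinj hcyc])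
  obtain ⟨horbit_i, horbit_j⟩ := orbitF_resolve_eq hn hf hinj hcyc hij hu.1 hun hpu
  rw [horbit_i, horbit_j]
  refine ⟨disjoint_left.mpr fun x hx hx' => ?_, ?_⟩
  · obtain ⟨a, ha, rfl⟩ := mem_image.mp hx
    obtain ⟨b, hb, hab⟩ := mem_image.mp hx'
    rw [mem_Ioc] at ha hb
    have := eq_of_iterate_modMap_eq hn hf hinj hcyc j (by omega) (by omega) hab.symm
    omega
  · rw [← image_union, Finset.Ioc_union_Ioc_eq_Ioc hu.1.le hu.2, himage]

theorem winding_resolve (hn : 0 < n) (hf : ∀ m, f (m + n) = f m + n) (hbd : IsBoundedFn n f)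
    (hinj : Injective f) (hij : i < j) (hji : j < i + n) (hfji : f j < f i) :
    winding n (resolve n f i j) = winding n f := by
  set W := Ico (j + 1 - n) (j + 1)
  have hW : W = Ico (j + 1 - n) (j + 1 - n + n) := by rw [sub_add_cancel]
  have hiW : i ∈ W := mem_Ico.mpr ⟨by omega, by omega⟩
  have hjW : j ∈ W := mem_Ico.mpr ⟨by omega, by omega⟩
  have hswap : ∀ m ∈ W, resolve n f i j m = f (Equiv.swap i j m) := fun m hm => by
    rw [hW] at hm hiW hjW
    unfold resolve
    split_ifs with hmi hmj
    · rw [Int.eq_of_emod_eq_of_mem_Ico hm hiW hmi, Equiv.swap_apply_left, sub_self, add_zero]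
    · rw [Int.eq_of_emod_eq_of_mem_Ico hm hjW hmj, Equiv.swap_apply_right, sub_self, add_zero]
    · rw [Equiv.swap_apply_of_ne_of_ne (by rintro rfl; exact hmi rfl)
        (by rintro rfl; exact hmj rfl)]
  rw [← cutCount_eq_winding hn (resolve_add hf) (isBoundedFn_resolve hbd hij hfji)
    (injective_resolve hf hinj (Int.emod_ne_emod_of_lt_of_lt_add hij hji)) (j + 1),
    ← cutCount_eq_winding hn hf hbd hinj (j + 1)]
  unfold cutCount
  rw [card_filter, card_filter]
  refine (sum_congr rfl fun m hm => ?_).trans (Equiv.Perm.sum_comp (Equiv.swap i j) W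
    (fun m => if j + 1 ≤ f m then 1 else 0) fun m hm => ?_)
  · rw [hswap m hm]
  · by_contra h
    exact hm (Equiv.swap_apply_of_ne_of_ne (fun e => h (e ▸ hiW)) (fun e => h (e ▸ hjW)))

end Resolve

theorem winding_eq_add_of_partition {n : ℕ} {g : ℤ → ℤ} {O₁ O₂ : Finset ℤ}
    (hdisj : Disjoint O₁ O₂) (hunion : O₁ ∪ O₂ = Ico 0 (n : ℤ)) :
    winding n g = windingOn n g O₁ + windingOn n g O₂ := by
  rw [windingOn, windingOn, ← card_union_of_disjoint (disjoint_filter.mpr fun t _ h₁ h₂ =>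
    disjoint_left.mp hdisj h₁.1 h₂.1), ← filter_or, winding]
  refine congrArg _ (filter_congr fun t ht => ?_)
  have : t % (n : ℤ) ∈ O₁ ∪ O₂ := by
    rw [hunion, mem_Ico]
    rw [mem_Icc] at ht
    exact ⟨Int.emod_nonneg _ (by omega), Int.emod_lt_of_pos _ (by omega)⟩
  rw [mem_union] at this
  tauto

end Positroid

open Positroid in
/-- For `f ∈ Θ_{k,n}` and an inversion `(i,j)` of `f`, the parameters
`(k₁,n₁)`, `(k₂,n₂)` of the two cycles obtained by resolving the crossing satisfy
`k₁ + k₂ = k` and `n₁ + n₂ = n`. -/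
theorem positroid_stmt7 (k n : ℕ) (f : ℤ → ℤ) (hf : IsTheta k n f) (i j : ℤ)
    (hij : (i, j) ∈ inversions n f) :
    (resParamsAt n (resolve n f i j) i).1 + (resParamsAt n (resolve n f i j) j).1 = k ∧
    (resParamsAt n (resolve n f i j) i).2 + (resParamsAt n (resolve n f i j) j).2 = n := by
  obtain ⟨⟨⟨hbij, hper⟩, hbd⟩, hcyc, rfl⟩ := hf
  simp only [inversions, mem_filter, mem_product, mem_Icc] at hij
  obtain ⟨⟨⟨hi1, hin⟩, -⟩, hlt, hfji⟩ := hij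
  have hn : 0 < n := by omega
  have hji : j < i + n := by
    have := hbd i
    have := hbd j
    omega
  have hres := Int.emod_ne_emod_of_lt_of_lt_add hlt hji
  have hg := resolve_add (i := i) (j := j) hper
  have hgbd := isBoundedFn_resolve hbd hlt hfji
  have hginj := injective_resolve hper hbij.injective hres
  obtain ⟨hdisj, hunion⟩ := orbitF_resolve hn hper hbij.injective hcyc hres
  refine ⟨?_, ?_⟩
  · rw [fst_resParamsAt hn hg hgbd hginj, fst_resParamsAt hn hg hgbd hginj,
      ← winding_resolve hn hper hbd hbij.injective hlt hji hfji,
      winding_eq_add_of_partition hdisj hunion]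
  · simp only [resParamsAt]
    rw [← card_union_of_disjoint hdisj, hunion, Int.card_Ico, sub_zero, Int.toNat_natCast]
end
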